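/- arXiv:1703.00752 — 6 statements merged into one kernel-verified Lean document; each statement's English description precedes it below -/
import Mathlib

section
/- Suppose that the measure μ is doubling within the ball B0 = B(x0,r0) with doubling constant C_μ, i.e. μ(2B) ≤ C_μ μ(B) for all balls B ⊆ B0. Then for every δ < 2/3, the ball δB0, regarded as a metric space with the induced metric, is globally doubling, with a doubling constant N depending only on δ and C_μ. -/
open MeasureTheory Metric Set ENNReal NNReal Filter

noncomputable def erealAbsE (x : EReal) : ℝ≥0∞ :=
  if x = ⊤ ∨ x = ⊥ then ⊤ else ENNReal.ofReal |x.toReal|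

def IsUnitSpeedCurve {Y : Type*} [PseudoMetricSpace Y] (γ : ℝ → Y) (l : ℝ) : Prop :=
  0 < l ∧ ContinuousOn γ (Set.Icc 0 l) ∧
    ∀ a b : ℝ, 0 ≤ a → a ≤ b → b ≤ l →
      eVariationOn γ (Set.Icc a b) = ENNReal.ofReal (b - a)

def IsUpperGradient {Y : Type*} [PseudoMetricSpace Y] [MeasurableSpace Y]
    (g : Y → ℝ≥0∞) (f : Y → EReal) : Prop :=
  Measurable g ∧
    ∀ (γ : ℝ → Y) (l : ℝ), IsUnitSpeedCurve γ l →
      erealAbsE (f (γ 0) - f (γ l)) ≤ ∫⁻ t in Set.Icc 0 l, g (γ t) ∂volume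

def DoublingWithin {Y : Type*} [MetricSpace Y] [MeasurableSpace Y]
    (μ : Measure Y) (x0 : Y) (r0 : ℝ) (C : ℝ≥0) : Prop :=
  ∀ (x : Y) (r : ℝ), 0 < r → ball x r ⊆ ball x0 r0 →
    μ (ball x (2 * r)) ≤ (C : ℝ≥0∞) * μ (ball x r)

def BallsPosFinite {Y : Type*} [MetricSpace Y] [MeasurableSpace Y] (μ : Measure Y) : Prop :=
  ∀ (x : Y) (r : ℝ), 0 < r → 0 < μ (ball x r) ∧ μ (ball x r) < ⊤

def PoincareBall {Y : Type*} [MetricSpace Y] [MeasurableSpace Y]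
    (μ : Measure Y) (q p : ℝ) (x : Y) (r : ℝ) (C lam : ℝ) : Prop :=
  ∀ (u : Y → ℝ) (g : Y → ℝ≥0∞),
    IntegrableOn u (ball x (lam * r)) μ →
    IsUpperGradient g (fun y => (u y : EReal)) →
    ((∫⁻ y in ball x r,
        ENNReal.ofReal |u y - ⨍ z in ball x r, u z ∂μ| ^ q ∂μ) / μ (ball x r)) ^ (1/q)
      ≤ ENNReal.ofReal (C * r) *
        ((∫⁻ y in ball x (lam * r), g y ^ p ∂μ) / μ (ball x (lam * r))) ^ (1/p)

def PoincareWithin {Y : Type*} [MetricSpace Y] [MeasurableSpace Y]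
    (μ : Measure Y) (q p : ℝ) (x0 : Y) (r0 : ℝ) (C lam : ℝ) : Prop :=
  ∀ (x : Y) (r : ℝ), 0 < r → ball x r ⊆ ball x0 r0 → PoincareBall μ q p x r C lam

def GloballyDoublingWith (N : ℕ) (Y : Type*) [PseudoMetricSpace Y] : Prop :=
  ∀ (x : Y) (r : ℝ), 0 < r → ∃ s : Finset Y, s.card ≤ N ∧
    ball x r ⊆ ⋃ y ∈ s, ball y (r / 2)

def GloballyDoubling (Y : Type*) [PseudoMetricSpace Y] : Prop :=
  ∃ N : ℕ, GloballyDoublingWith N Y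

noncomputable def newtonianNorm {Y : Type*} [PseudoMetricSpace Y] [MeasurableSpace Y]
    (μ : Measure Y) (p : ℝ) (f : Y → EReal) : ℝ≥0∞ :=
  ((∫⁻ y, erealAbsE (f y) ^ p ∂μ) +
    ⨅ g ∈ {g : Y → ℝ≥0∞ | IsUpperGradient g f}, ∫⁻ y, g y ^ p ∂μ) ^ (1/p)

noncomputable def newtonianNormOn {X : Type*} [MetricSpace X] [MeasurableSpace X]
    (μ : Measure X) (p : ℝ) (E : Set X) (f : X → EReal) : ℝ≥0∞ :=
  newtonianNorm (μ.comap (Subtype.val : E → X)) p (fun y : E => f y)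

def MemN1p {X : Type*} [MetricSpace X] [MeasurableSpace X]
    (μ : Measure X) (p : ℝ) (f : X → EReal) : Prop :=
  Measurable f ∧ newtonianNorm μ p f < ⊤

def MemN1pLoc {X : Type*} [MetricSpace X] [MeasurableSpace X]
    (μ : Measure X) (p : ℝ) (f : X → EReal) : Prop :=
  Measurable f ∧ ∀ x : X, ∃ (c : X) (r : ℝ), 0 < r ∧ x ∈ ball c r ∧
    newtonianNormOn μ p (ball c r) f < ⊤

noncomputable def sobolevCapacity {X : Type*} [MetricSpace X] [MeasurableSpace X]
    (μ : Measure X) (p : ℝ) (E : Set X) : ℝ≥0∞ :=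
  ⨅ u ∈ {u : X → EReal | Measurable u ∧ ∀ x ∈ E, u x = 1},
    newtonianNorm μ p u ^ p

def ConnectsInWithLength {Y : Type*} [PseudoMetricSpace Y]
    (γ : ℝ → Y) (x y : Y) (A : Set Y) (ℓ : ℝ≥0∞) : Prop :=
  ContinuousOn γ (Set.Icc 0 1) ∧ γ 0 = x ∧ γ 1 = y ∧
    (∀ t ∈ Set.Icc (0:ℝ) 1, γ t ∈ A) ∧ eVariationOn γ (Set.Icc 0 1) ≤ ℓ

/-!
A maximal `ε`-separated subset of `B(x, r) ∩ δB₀`, with `ε = ρ / 4` and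
`ρ = min r ((1 - δ) r₀ / 2)`, covers it by balls of radius `r / 2`, and its size is bounded by
packing: the balls of radius `ρ / 8` around its points are disjoint, lie in `U = B(x, 2r) ∩ B₀`,
and each has measure at least `μ U / C^(k+6)`, where `2^(-k) < 2 - 3δ`. For small `r`, doubling
five times around each point `y` gives a ball containing `B(x, 2r)`; for large `r` it gives
`B(y, 2 (1 - δ) r₀) ⊇ B(x₀, r₀ / 2^(k+1))`, from which `k + 1` doublings around `x₀` reach
`B₀ ⊇ U`. That inclusion, uniform in `y ∈ δB₀`, is where `δ < 2/3` enters: it needs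
`δ r₀ < 2 (1 - δ) r₀`.
-/

namespace Metric

variable {X : Type*} [PseudoMetricSpace X] {ε : ℝ≥0} {A : Set X}

theorem IsSeparated.lt_dist {s : Set X} (hs : IsSeparated ε s) {x y : X} (hx : x ∈ s)
    (hy : y ∈ s) (hxy : x ≠ y) : (ε : ℝ) < dist x y := by
  have : (ε : ℝ≥0∞) < edist x y := hs hx hy hxy
  rwa [edist_nndist, ENNReal.coe_lt_coe, ← NNReal.coe_lt_coe, coe_nndist] at this

theorem packingNumber_le_of_forall_finset {n : ℕ}
    (h : ∀ s : Finset X, ↑s ⊆ A → IsSeparated ε (s : Set X) → s.card ≤ n) :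
    packingNumber ε A ≤ n := by
  refine iSup₂_le fun C hCA => iSup_le fun hC => ?_
  by_contra! hlt
  obtain ⟨t, htC, htcard⟩ := Set.exists_subset_encard_eq (Order.add_one_le_of_lt hlt)
  have htfin : t.Finite := Set.finite_of_encard_eq_coe htcard
  have := h htfin.toFinset (by simpa using htC.trans hCA) (by simpa using hC.subset htC)
  rw [htfin.encard_eq_coe_toFinset_card] at htcard
  norm_cast at htcard
  omega

theorem exists_finset_subset_iUnion_ball_of_packingNumber_le {R : ℝ} (hεR : ε < R) {n : ℕ}
    (h : packingNumber ε A ≤ n) : ∃ s : Finset X, s.card ≤ n ∧ A ⊆ ⋃ y ∈ s, ball y R := by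
  have hfin : packingNumber ε A ≠ ⊤ := ne_top_of_le_ne_top (ENat.natCast_ne_top n) h
  have hS : (maximalSeparatedSet ε A).Finite :=
    Set.encard_ne_top_iff.mp (encard_maximalSeparatedSet hfin ▸ hfin)
  refine ⟨hS.toFinset, ?_, ?_⟩
  · have := encard_maximalSeparatedSet hfin ▸ h
    rw [hS.encard_eq_coe_toFinset_card] at this
    exact_mod_cast this
  · refine (isCover_maximalSeparatedSet hfin).subset_iUnion_closedBall.trans ?_
    simp only [Set.Finite.mem_toFinset]
    exact Set.iUnion₂_mono fun y _ => closedBall_subset_ball hεR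

end Metric

theorem card_le_of_pairwiseDisjoint_of_measure_le {Ω ι : Type*} [MeasurableSpace Ω]
    {μ : Measure Ω} {U : Set Ω} (hU0 : μ U ≠ 0) (hU : μ U ≠ ⊤) {s : Finset ι} {B : ι → Set Ω}
    {D : ℝ≥0∞} (hBm : ∀ i ∈ s, MeasurableSet (B i)) (hdisj : (s : Set ι).PairwiseDisjoint B)
    (hBU : ∀ i ∈ s, B i ⊆ U) (hD : ∀ i ∈ s, μ U ≤ D * μ (B i)) : (s.card : ℝ≥0∞) ≤ D := by
  refine (ENNReal.mul_le_mul_iff_left hU0 hU).mp ?_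
  calc (s.card : ℝ≥0∞) * μ U = ∑ _i ∈ s, μ U := by simp
    _ ≤ ∑ i ∈ s, D * μ (B i) := Finset.sum_le_sum hD
    _ = D * μ (⋃ i ∈ s, B i) := by rw [← Finset.mul_sum, measure_biUnion_finset hdisj hBm]
    _ ≤ D * μ U := by gcongr; exact Set.iUnion₂_subset hBU

namespace DoublingWithin

variable {X : Type*} [MetricSpace X] [MeasurableSpace X] {μ : Measure X} {x0 : X} {r0 : ℝ}
  {C : ℝ≥0}

theorem one_le (hC : DoublingWithin μ x0 r0 C) (hμ : BallsPosFinite μ) (hr0 : 0 < r0) :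
    1 ≤ (C : ℝ≥0∞) := by
  obtain ⟨h0, htop⟩ := hμ x0 (r0 / 2) (half_pos hr0)
  have hdouble := hC x0 (r0 / 2) (half_pos hr0) (ball_subset_ball (half_le_self hr0.le))
  rw [mul_div_cancel₀ _ two_ne_zero] at hdouble
  refine (ENNReal.mul_le_mul_iff_left h0.ne' htop.ne).mp ?_
  rw [one_mul]
  exact (measure_mono (ball_subset_ball (half_le_self hr0.le))).trans hdouble

theorem measure_ball_two_pow_mul_le (hC : DoublingWithin μ x0 r0 C) {y : X} {t : ℝ}
    (ht : 0 < t) (k : ℕ) (h : ball y (2 ^ k * t) ⊆ ball x0 r0) :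
    μ (ball y (2 ^ (k + 1) * t)) ≤ C ^ (k + 1) * μ (ball y t) := by
  induction k with
  | zero => simpa using hC y t ht (by simpa using h)
  | succ k ih =>
    have hk : ball y (2 ^ k * t) ⊆ ball x0 r0 :=
      (ball_subset_ball (by gcongr <;> norm_num)).trans h
    calc μ (ball y (2 ^ (k + 2) * t)) = μ (ball y (2 * (2 ^ (k + 1) * t))) := by ring_nf
      _ ≤ C * μ (ball y (2 ^ (k + 1) * t)) := hC _ _ (by positivity) h
      _ ≤ C * (C ^ (k + 1) * μ (ball y t)) := by gcongr; exact ih hk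
      _ = C ^ (k + 2) * μ (ball y t) := by ring

variable {δ : ℝ} {k : ℕ}

theorem measure_inter_ball_le_four_mul (hC : DoublingWithin μ x0 r0 C) (hμ : BallsPosFinite μ)
    (hr0 : 0 < r0) (hk : (2 : ℝ)⁻¹ ^ k < 2 - 3 * δ) {x y : X} {r : ℝ}
    (hy : dist y x0 < δ * r0) (hyx : dist y x < r) :
    μ (ball x (2 * r) ∩ ball x0 r0) ≤
      C ^ (k + 1) * μ (ball y (4 * min r ((1 - δ) * r0 / 2))) := by
  rcases le_total r ((1 - δ) * r0 / 2) with hr | hr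
  · rw [min_eq_left hr]
    have hxy : ball x (2 * r) ⊆ ball y (4 * r) :=
      ball_subset_ball' (by linarith [dist_comm x y, dist_nonneg (x := x) (y := y)])
    calc μ (ball x (2 * r) ∩ ball x0 r0) ≤ μ (ball y (4 * r)) :=
          measure_mono (inter_subset_left.trans hxy)
      _ ≤ C ^ (k + 1) * μ (ball y (4 * r)) :=
          le_mul_of_one_le_left' (one_le_pow₀ (hC.one_le hμ hr0))
  · rw [min_eq_right hr]
    set t := (2 : ℝ)⁻¹ ^ (k + 1) * r0 with ht
    have hr0t : 2 ^ (k + 1) * t = r0 := by rw [ht, ← mul_assoc, ← mul_pow]; norm_num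
    have hhalf : 2 ^ k * t = r0 / 2 := by rw [← hr0t, pow_succ]; ring
    have htk : t = 2⁻¹ ^ k * r0 / 2 := by rw [ht, pow_succ]; ring
    have hkr0 : 2⁻¹ ^ k * r0 < (2 - 3 * δ) * r0 := mul_lt_mul_of_pos_right hk hr0
    have hkr0' : 0 < (2 : ℝ)⁻¹ ^ k * r0 := by positivity
    calc μ (ball x (2 * r) ∩ ball x0 r0) ≤ μ (ball x0 (2 ^ (k + 1) * t)) := by
          rw [hr0t]; exact measure_mono inter_subset_right
      _ ≤ C ^ (k + 1) * μ (ball x0 t) :=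
          hC.measure_ball_two_pow_mul_le (by positivity) k (ball_subset_ball (by linarith))
      _ ≤ C ^ (k + 1) * μ (ball y (4 * ((1 - δ) * r0 / 2))) := by
          gcongr; exact ball_subset_ball' (by linarith [dist_comm x0 y])

theorem measure_inter_ball_le_div_eight (hC : DoublingWithin μ x0 r0 C)
    (hμ : BallsPosFinite μ) (hr0 : 0 < r0) (hk : (2 : ℝ)⁻¹ ^ k < 2 - 3 * δ) {x y : X} {r : ℝ}
    (hy : dist y x0 < δ * r0) (hyx : dist y x < r) :
    μ (ball x (2 * r) ∩ ball x0 r0) ≤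
      C ^ (k + 6) * μ (ball y (min r ((1 - δ) * r0 / 2) / 8)) := by
  set ρ := min r ((1 - δ) * r0 / 2)
  have hδ : δ < 1 := by linarith [pow_pos (by norm_num : (0 : ℝ) < 2⁻¹) k]
  have hρ : 0 < ρ := lt_min (dist_nonneg.trans_lt hyx) (by nlinarith)
  have hB0 : ball y (2 ^ 4 * (ρ / 8)) ⊆ ball x0 r0 :=
    ball_subset_ball' (by nlinarith [min_le_right r ((1 - δ) * r0 / 2)])
  calc μ (ball x (2 * r) ∩ ball x0 r0) ≤ C ^ (k + 1) * μ (ball y (2 ^ (4 + 1) * (ρ / 8))) := by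
        convert hC.measure_inter_ball_le_four_mul hμ hr0 hk hy hyx using 4; ring
    _ ≤ C ^ (k + 1) * (C ^ (4 + 1) * μ (ball y (ρ / 8))) := by
        gcongr; exact hC.measure_ball_two_pow_mul_le (by positivity) 4 hB0
    _ = C ^ (k + 6) * μ (ball y (ρ / 8)) := by ring

theorem card_le_of_isSeparated [OpensMeasurableSpace X] (hC : DoublingWithin μ x0 r0 C)
    (hμ : BallsPosFinite μ) (hr0 : 0 < r0) (hk : (2 : ℝ)⁻¹ ^ k < 2 - 3 * δ)
    {x : ball x0 (δ * r0)} {r : ℝ} (hr : 0 < r) {ε : ℝ≥0}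
    (hε : min r ((1 - δ) * r0 / 2) / 4 ≤ ε) {s : Finset (ball x0 (δ * r0))}
    (hsx : ↑s ⊆ ball x r) (hsep : IsSeparated ε (s : Set (ball x0 (δ * r0)))) :
    (s.card : ℝ≥0∞) ≤ C ^ (k + 6) := by
  have hδ : δ < 1 := by linarith [pow_pos (by norm_num : (0 : ℝ) < 2⁻¹) k]
  set ρ := min r ((1 - δ) * r0 / 2)
  have hρ : 0 < ρ := lt_min hr (by nlinarith)
  set U := ball (x : X) (2 * r) ∩ ball x0 r0
  have hsub : ∀ y : ball x0 (δ * r0), dist y x < r → ball (y : X) (ρ / 8) ⊆ U := by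
    intro y hyx
    have hy : dist (y : X) x0 < δ * r0 := y.2
    refine subset_inter (ball_subset_ball' ?_) (ball_subset_ball' ?_)
    · nlinarith [min_le_left r ((1 - δ) * r0 / 2), Subtype.dist_eq y x]
    · nlinarith [min_le_right r ((1 - δ) * r0 / 2)]
  have hU0 : μ U ≠ 0 := fun h =>
    (hμ x (ρ / 8) (by positivity)).1.ne' (measure_mono_null (hsub x (by rwa [dist_self])) h)
  have hU : μ U ≠ ⊤ := ne_top_of_le_ne_top (hμ x0 r0 hr0).2.ne (measure_mono inter_subset_right)
  refine card_le_of_pairwiseDisjoint_of_measure_le hU0 hU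
    (B := fun y : ball x0 (δ * r0) => ball (y : X) (ρ / 8))
    (fun _ _ => measurableSet_ball) ?_ (fun y hy => hsub y (hsx hy))
    (fun y hy => hC.measure_inter_ball_le_div_eight hμ hr0 hk y.2 (hsx hy))
  intro y hy z hz hyz
  refine ball_disjoint_ball ?_
  have := hsep.lt_dist hy hz hyz
  rw [Subtype.dist_eq] at this
  linarith

end DoublingWithin

theorem doubling_within_implies_globally_doubling_subball_general
    (Cμ : ℝ≥0) (δ : ℝ) (hδ : δ < 2 / 3) :
    ∃ N : ℕ, ∀ (X : Type) [MetricSpace X] [MeasurableSpace X] [BorelSpace X]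
      (μ : Measure X), BallsPosFinite μ →
      ∀ (x0 : X) (r0 : ℝ), 0 < r0 → DoublingWithin μ x0 r0 Cμ →
        GloballyDoublingWith N ↥(ball x0 (δ * r0)) := by
  obtain ⟨k, hk⟩ := exists_pow_lt_of_lt_one (by linarith : (0 : ℝ) < 2 - 3 * δ)
    (by norm_num : (2 : ℝ)⁻¹ < 1)
  refine ⟨⌈Cμ ^ (k + 6)⌉₊, fun X _ _ _ μ hμ x0 r0 hr0 hC x r hr => ?_⟩
  set ρ := min r ((1 - δ) * r0 / 2)
  have hρ : 0 ≤ ρ / 4 := by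
    have : 0 < (1 - δ) * r0 / 2 := by nlinarith
    positivity
  refine exists_finset_subset_iUnion_ball_of_packingNumber_le (ε := (ρ / 4).toNNReal) ?_
    (packingNumber_le_of_forall_finset fun s hsx hsep => ?_)
  · rw [Real.coe_toNNReal _ hρ]
    linarith [min_le_left r ((1 - δ) * r0 / 2)]
  · have hcard : (s.card : ℝ≥0) ≤ Cμ ^ (k + 6) := by
      exact_mod_cast hC.card_le_of_isSeparated hμ hr0 hk hr (Real.le_coe_toNNReal _) hsx hsep
    exact_mod_cast hcard.trans (Nat.le_ceil _)

/-- If `μ` is doubling within `B(x0,r0)` with constant `Cμ`, then for every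
`δ < 2/3` the ball `B(x0, δ r0)`, with the induced metric, is globally doubling with a
constant `N` depending only on `δ` and `Cμ`. -/
theorem doubling_within_implies_globally_doubling_subball
    (Cμ : ℝ≥0) (δ : ℝ) (hδ0 : 0 < δ) (hδ : δ < 2 / 3) :
    ∃ N : ℕ, ∀ (X : Type) [MetricSpace X] [MeasurableSpace X] [BorelSpace X]
      (μ : Measure X), BallsPosFinite μ →
      ∀ (x0 : X) (r0 : ℝ), 0 < r0 → DoublingWithin μ x0 r0 Cμ →
        GloballyDoublingWith N ↥(ball x0 (δ * r0)) :=
  doubling_within_implies_globally_doubling_subball_general Cμ δ hδ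
end

section
/- Assume that the metric space X is semilocally doubling. Then X is proper if and only if X is complete. -/
open MeasureTheory Metric Set ENNReal NNReal Filter

/-! Halving the radius `k` times covers a ball of a globally doubling space by finitely many
balls of radius `r / 2 ^ k`; hence every ball `B(x, r)` of `X` is totally bounded, already in its
induced metric. In a complete space, a closed ball lies in a larger open ball, so it is closed and
totally bounded, i.e. compact. -/

section GloballyDoubling

variable {Y : Type*} [PseudoMetricSpace Y]

theorem GloballyDoublingWith.exists_finset_ball_subset_iUnion_ball_div_pow {N : ℕ}
    (hN : GloballyDoublingWith N Y) (x : Y) {r : ℝ} (hr : 0 < r) (k : ℕ) :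
    ∃ s : Finset Y, ball x r ⊆ ⋃ z ∈ s, ball z (r / 2 ^ k) := by
  classical
  induction k with
  | zero => exact ⟨{x}, by simp⟩
  | succ k ih =>
    obtain ⟨s, hs⟩ := ih
    choose t _ ht using fun z : Y => hN z (r / 2 ^ k) (by positivity)
    refine ⟨s.biUnion t, fun p hp => ?_⟩
    obtain ⟨z, hz, hpz⟩ := mem_iUnion₂.1 (hs hp)
    obtain ⟨w, hw, hpw⟩ := mem_iUnion₂.1 (ht z hpz)
    rw [pow_succ, ← div_div]
    exact mem_iUnion₂.2 ⟨w, Finset.mem_biUnion.2 ⟨z, hz, hw⟩, hpw⟩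

theorem GloballyDoubling.totallyBounded_ball (hd : GloballyDoubling Y) (x : Y) (r : ℝ) :
    TotallyBounded (ball x r) := by
  obtain ⟨N, hN⟩ := hd
  rcases le_or_gt r 0 with hr | hr
  · simp [ball_eq_empty.2 hr]
  rw [Metric.totallyBounded_iff]
  intro ε hε
  obtain ⟨k, hk⟩ := exists_pow_lt_of_lt_one (div_pos hε hr) (by norm_num : (1 / 2 : ℝ) < 1)
  obtain ⟨s, hs⟩ := hN.exists_finset_ball_subset_iUnion_ball_div_pow x hr k
  refine ⟨s, s.finite_toSet, hs.trans <| iUnion₂_mono fun z _ => ball_subset_ball ?_⟩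
  calc r / 2 ^ k = r * (1 / 2) ^ k := by rw [one_div_pow, mul_one_div]
    _ ≤ r * (ε / r) := by gcongr
    _ = ε := by field_simp

end GloballyDoubling

theorem totallyBounded_ball_of_globallyDoubling_ball {X : Type*} [PseudoMetricSpace X] {x : X}
    {r : ℝ} (hr : 0 < r) (hd : GloballyDoubling (ball x r)) : TotallyBounded (ball x r) := by
  have hcenter : univ ⊆ ball (⟨x, mem_ball_self hr⟩ : ball x r) r := fun p _ => p.2
  have hunivTB := ((hd.totallyBounded_ball _ r).subset hcenter).image
    uniformContinuous_subtype_val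
  rwa [image_univ, Subtype.range_coe] at hunivTB

theorem ProperSpace.of_totallyBounded_ball {X : Type*} [PseudoMetricSpace X] [CompleteSpace X]
    (h : ∀ (x : X) (r : ℝ), 0 < r → TotallyBounded (ball x r)) : ProperSpace X :=
  .of_isCompact_closedBall_of_le 0 fun x r hr =>
    ((h x (r + 1) (by linarith)).subset (closedBall_subset_ball (by linarith)))
      |>.isCompact_of_isClosed isClosed_closedBall

/-- If the metric space `X` is semilocally doubling (every ball, with the
induced metric, is globally doubling), then `X` is proper if and only if it is complete. -/
theorem proper_iff_complete_of_semilocally_doubling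
    {X : Type*} [MetricSpace X]
    (h : ∀ (x : X) (r : ℝ), 0 < r → GloballyDoubling ↥(ball x r)) :
    ProperSpace X ↔ CompleteSpace X :=
  ⟨fun _ => inferInstance, fun _ => .of_totallyBounded_ball fun x r hr =>
    totallyBounded_ball_of_globallyDoubling_ball hr (h x r hr)⟩
end

section
/- If X is proper and the metric space X is locally doubling, then X is semilocally doubling, i.e. every ball in X, with the induced metric, is globally doubling. -/
open MeasureTheory Metric Set ENNReal NNReal Filter

/-! Finitely many doubling balls `B(zᵢ, ρᵢ)` cover the compact set `closedBall x r`; let `δ` be a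
Lebesgue number of this cover. For `s ≤ δ`, a ball `B(y, s)` lies in one `B(zᵢ, ρᵢ)`, hence is
covered by `Nᵢ²` balls of radius `s / 4`; for `s > δ`, a fixed finite `δ / 4`-net of the compact
set does the job. Moving each centre to a point of `B(x, r)` within `s / 4` of it at most doubles
the radii, which gives covers of `B(y, s) ∩ B(x, r)` by uniformly many balls of radius `s / 2`
centred in `B(x, r)`. -/

section Doubling

variable {X : Type*} [PseudoMetricSpace X]

theorem exists_finset_subset_cover_two_mul {A : Set X} {t : Finset X} {ε : ℝ}
    (hA : A ⊆ ⋃ c ∈ t, ball c ε) :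
    ∃ t' : Finset X, (t' : Set X) ⊆ A ∧ t'.card ≤ t.card ∧ A ⊆ ⋃ c ∈ t', ball c (2 * ε) := by
  classical
  choose! f hfA hfc using fun c (hc : (A ∩ ball c ε).Nonempty) => hc
  refine ⟨(t.filter fun c => (A ∩ ball c ε).Nonempty).image f, ?_, ?_, ?_⟩
  · intro a ha
    obtain ⟨c, hc, rfl⟩ := Finset.mem_image.1 ha
    exact hfA c (Finset.mem_filter.1 hc).2
  · exact Finset.card_image_le.trans (Finset.card_filter_le _ _)
  · intro a ha
    obtain ⟨c, hct, hac⟩ := mem_iUnion₂.1 (hA ha)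
    have hne : (A ∩ ball c ε).Nonempty := ⟨a, ha, hac⟩
    refine mem_iUnion₂.2 ⟨f c, Finset.mem_image_of_mem f (Finset.mem_filter.2 ⟨hct, hne⟩), ?_⟩
    calc dist a (f c) ≤ dist a c + dist (f c) c := dist_triangle_right _ _ _
      _ < ε + ε := add_lt_add (mem_ball.1 hac) (mem_ball.1 (hfc c hne))
      _ = 2 * ε := by ring

theorem GloballyDoublingWith.exists_cover_ball_div_pow {N : ℕ} (hX : GloballyDoublingWith N X)
    (k : ℕ) (x : X) {r : ℝ} (hr : 0 < r) :
    ∃ t : Finset X, t.card ≤ N ^ k ∧ ball x r ⊆ ⋃ c ∈ t, ball c (r / 2 ^ k) := by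
  classical
  induction k with
  | zero => exact ⟨{x}, by simp, by simp⟩
  | succ k ih =>
    obtain ⟨t, htN, hxt⟩ := ih
    choose u huN hcu using fun c : X => hX c (r / 2 ^ k) (by positivity)
    refine ⟨t.biUnion u, ?_, ?_⟩
    · calc (t.biUnion u).card ≤ t.card * N := t.card_biUnion_le_card_mul u N fun c _ => huN c
        _ ≤ N ^ k * N := Nat.mul_le_mul_right N htN
    · intro w hw
      obtain ⟨c, hct, hwc⟩ := mem_iUnion₂.1 (hxt hw)
      obtain ⟨d, hdu, hwd⟩ := mem_iUnion₂.1 (hcu c hwc)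
      refine mem_iUnion₂.2 ⟨d, Finset.mem_biUnion.2 ⟨c, hct, hdu⟩, ?_⟩
      rwa [pow_succ, ← div_div]

theorem GloballyDoublingWith.exists_cover_ball_inter {S : Set X} {N : ℕ}
    (hS : GloballyDoublingWith N S) (k : ℕ) {y : X} (hy : y ∈ S) {r : ℝ} (hr : 0 < r) :
    ∃ t : Finset X, t.card ≤ N ^ k ∧ ball y r ∩ S ⊆ ⋃ c ∈ t, ball c (r / 2 ^ k) := by
  obtain ⟨t, htN, hyt⟩ := hS.exists_cover_ball_div_pow k ⟨y, hy⟩ hr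
  refine ⟨t.map (Function.Embedding.subtype _), by rwa [Finset.card_map], ?_⟩
  rintro w ⟨hwy, hwS⟩
  obtain ⟨c, hct, hwc⟩ := mem_iUnion₂.1 (hyt (show (⟨w, hwS⟩ : S) ∈ ball ⟨y, hy⟩ r from hwy))
  exact mem_iUnion₂.2 ⟨c, Finset.mem_map_of_mem _ hct, hwc⟩

theorem globallyDoublingWith_of_forall_cover {S : Set X} {N : ℕ}
    (h : ∀ y ∈ S, ∀ r > 0, ∃ t : Finset X, t.card ≤ N ∧ ball y r ∩ S ⊆ ⋃ c ∈ t, ball c (r / 4)) :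
    GloballyDoublingWith N S := by
  classical
  intro y r hr
  obtain ⟨t, htN, hyt⟩ := h y y.2 r hr
  obtain ⟨t', ht'S, ht't, hyt'⟩ := exists_finset_subset_cover_two_mul hyt
  refine ⟨t'.subtype (· ∈ S), ?_, ?_⟩
  · rw [Finset.card_subtype]
    exact (Finset.card_filter_le _ _).trans (ht't.trans htN)
  · intro w hw
    obtain ⟨c, hct', hwc⟩ := mem_iUnion₂.1 (hyt' ⟨hw, w.2⟩)
    refine mem_iUnion₂.2 ⟨⟨c, (ht'S hct').2⟩, Finset.mem_subtype.2 hct', ?_⟩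
    show dist (w : X) c < r / 2
    linarith [mem_ball.1 hwc]

theorem globallyDoubling_of_subset_isCompact {S K : Set X} (hSK : S ⊆ K) (hK : IsCompact K)
    (h : ∀ x ∈ K, ∃ r : ℝ, 0 < r ∧ GloballyDoubling (ball x r)) : GloballyDoubling S := by
  choose ρ hρ N hN using fun x : K => h x x.2
  obtain ⟨t, hKt⟩ := hK.elim_finite_subcover (fun z : K => ball (z : X) (ρ z))
    (fun _ => isOpen_ball) fun x hx => mem_iUnion.2 ⟨⟨x, hx⟩, mem_ball_self (hρ _)⟩
  obtain ⟨δ, hδ, hδt⟩ := lebesgue_number_lemma_of_metric (c := fun z : t => ball (z : X) (ρ z))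
    hK (fun _ => isOpen_ball) (by simpa [iUnion_subtype] using hKt)
  obtain ⟨v, -, hKv⟩ := hK.elim_nhds_subcover (fun x => ball x (δ / 4))
    fun x _ => ball_mem_nhds x (by positivity)
  refine ⟨max (t.sup N ^ 2) v.card, globallyDoublingWith_of_forall_cover ?_⟩
  intro y hy s hs
  rcases le_or_gt s δ with hsδ | hδs
  · obtain ⟨z, hyz⟩ := hδt y (hSK hy)
    obtain ⟨u, huN, hyu⟩ := (hN z).exists_cover_ball_inter 2 (hyz (mem_ball_self hδ)) hs
    refine ⟨u, huN.trans ?_, ?_⟩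
    · exact (Nat.pow_le_pow_left (Finset.le_sup z.2) 2).trans (le_max_left _ _)
    · have hsz : ball y s ⊆ ball (z : X) (ρ z) := (ball_subset_ball hsδ).trans hyz
      rw [show (2 : ℝ) ^ 2 = 4 by norm_num] at hyu
      exact fun w hw => hyu ⟨hw.1, hsz hw.1⟩
  · refine ⟨v, le_max_right _ _, fun w hw => ?_⟩
    obtain ⟨c, hcv, hwc⟩ := mem_iUnion₂.1 (hKv (hSK hw.2))
    exact mem_iUnion₂.2 ⟨c, hcv, ball_subset_ball (by linarith) hwc⟩

end Doubling

/-- If `X` is proper and locally doubling, then `X` is semilocally doubling,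
i.e. every ball in `X`, with the induced metric, is globally doubling. -/
theorem semilocally_doubling_of_locally_doubling_of_proper
    {X : Type*} [MetricSpace X] [ProperSpace X]
    (h : ∀ x : X, ∃ r : ℝ, 0 < r ∧ GloballyDoubling ↥(ball x r)) :
    ∀ (x : X) (r : ℝ), 0 < r → GloballyDoubling ↥(ball x r) := fun x r _ =>
  globallyDoubling_of_subset_isCompact ball_subset_closedBall (isCompact_closedBall x r)
    fun y _ => h y
end

section
/- Let x, y ∈ X with x ≠ y and set B0 = B(x, 2 d(x,y)). Assume that the p-Poincaré inequality holds within B0 with constant C_PI (and some dilation constant λ ≥ 1) and that μ is doubling within B0 with constant C_μ. Let Λ = 3 C_μ^3 C_PI. If the closure of ΛB0 is compact, then x and y can be connected by a curve lying in the closure of ΛB0 of length at most L d(x,y), where L = 9Λ. -/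
open MeasureTheory Metric Set ENNReal NNReal Filter

/-!
For `ε > 0` let `d_ε(x, ·)` be the infimal length of `ε`-chains starting at `x`. Truncated at a
finite level it is `1`-Lipschitz at scales below `ε`, so the constant `1` is an upper gradient of
it. Telescoping the Poincaré inequality along balls shrinking to `x` and to `y`, with doubling
controlling the ratios of consecutive measures, bounds `d_ε(x, y)` by
`(24/7 Cμ³ + 2 Cμ²) C_PI d(x, y) < 2Λ d(x, y)` uniformly in `ε`. A chain of almost this length,
traversed at constant speed, is a path that is Lipschitz up to an error `ε` and stays in `ΛB0`.
As `ε → 0` these paths converge pointwise along an ultrafilter in the compact closure of `ΛB0`,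
and the limit is a curve of length at most the bound.
-/


open Topology

section ChainDist

variable {X : Type*} [PseudoMetricSpace X] {ε : ℝ} {x z a b : X}

noncomputable def chainDist (ε : ℝ) (x z : X) : ℝ≥0∞ :=
  ⨅ (n : ℕ) (w : ℕ → X) (_ : w 0 = x ∧ w n = z ∧ ∀ i < n, dist (w i) (w (i + 1)) < ε),
    ENNReal.ofReal (∑ i ∈ Finset.range n, dist (w i) (w (i + 1)))

lemma chainDist_le_sum {n : ℕ} {w : ℕ → X} (h0 : w 0 = x) (hn : w n = z)
    (hw : ∀ i < n, dist (w i) (w (i + 1)) < ε) :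
    chainDist ε x z ≤ ENNReal.ofReal (∑ i ∈ Finset.range n, dist (w i) (w (i + 1))) :=
  iInf₂_le_of_le n w (iInf_le_of_le ⟨h0, hn, hw⟩ le_rfl)

@[simp]
lemma chainDist_self (ε : ℝ) (x : X) : chainDist ε x x = 0 := by
  simpa using chainDist_le_sum (ε := ε) (n := 0) (w := fun _ => x) rfl rfl (by simp)

lemma exists_chain_of_chainDist_lt {ℓ : ℝ} (h : chainDist ε x z < ENNReal.ofReal ℓ) :
    ∃ (n : ℕ) (w : ℕ → X), w 0 = x ∧ w n = z ∧ (∀ i < n, dist (w i) (w (i + 1)) < ε) ∧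
      ∑ i ∈ Finset.range n, dist (w i) (w (i + 1)) < ℓ := by
  simp only [chainDist, iInf_lt_iff] at h
  obtain ⟨n, w, ⟨h0, hn, hw⟩, hlt⟩ := h
  exact ⟨n, w, h0, hn, hw, (ENNReal.ofReal_lt_ofReal_iff'.mp hlt).1⟩

lemma chainDist_le_add_dist (hab : dist a b < ε) :
    chainDist ε x b ≤ chainDist ε x a + ENNReal.ofReal (dist a b) := by
  simp only [chainDist, ENNReal.iInf_add]
  refine le_iInf₂ fun n w => le_iInf fun ⟨h0, hn, hw⟩ => ?_
  let w' : ℕ → X := fun i => if i ≤ n then w i else b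
  have hsum : ∀ i ∈ Finset.range n, dist (w' i) (w' (i + 1)) = dist (w i) (w (i + 1)) := by
    intro i hi
    have hi := Finset.mem_range.mp hi
    simp [w', hi.le, Nat.succ_le_of_lt hi]
  have hlast : dist (w' n) (w' (n + 1)) = dist a b := by simp [w', hn]
  calc chainDist ε x b
      ≤ ENNReal.ofReal (∑ i ∈ Finset.range (n + 1), dist (w' i) (w' (i + 1))) := by
        refine chainDist_le_sum (by simp [w', h0]) (by simp [w']) fun i hi => ?_
        rcases Nat.lt_succ_iff_lt_or_eq.mp hi with hi | rfl
        · rw [hsum i (Finset.mem_range.mpr hi)]; exact hw i hi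
        · rwa [hlast]
    _ = ENNReal.ofReal (∑ i ∈ Finset.range n, dist (w i) (w (i + 1)))
          + ENNReal.ofReal (dist a b) := by
        rw [Finset.sum_range_succ, Finset.sum_congr rfl hsum, hlast,
          ENNReal.ofReal_add (Finset.sum_nonneg fun _ _ => dist_nonneg) dist_nonneg]

end ChainDist

lemma ENNReal.truncateToReal_le_add_of_le_add {t a b : ℝ≥0∞} (ht : t ≠ ∞) {δ : ℝ}
    (hδ : 0 ≤ δ) (h : a ≤ b + ENNReal.ofReal δ) :
    ENNReal.truncateToReal t a ≤ ENNReal.truncateToReal t b + δ := by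
  have hmin : min t a ≤ min t b + ENNReal.ofReal δ := by
    rw [← min_add_add_right]
    exact min_le_min le_self_add h
  have hfin : min t b ≠ ∞ := ne_top_of_le_ne_top ht (min_le_left _ _)
  have := ENNReal.toReal_mono (ENNReal.add_ne_top.mpr ⟨hfin, ENNReal.ofReal_ne_top⟩) hmin
  rwa [ENNReal.toReal_add hfin ENNReal.ofReal_ne_top, ENNReal.toReal_ofReal hδ] at this

section UpperGradient

variable {X : Type*} [PseudoMetricSpace X]

lemma IsUnitSpeedCurve.dist_le {γ : ℝ → X} {l : ℝ} (hγ : IsUnitSpeedCurve γ l) {s t : ℝ}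
    (hs : 0 ≤ s) (hst : s ≤ t) (ht : t ≤ l) : dist (γ s) (γ t) ≤ t - s := by
  have h := eVariationOn.edist_le γ (s := Set.Icc s t) ⟨le_rfl, hst⟩ ⟨hst, le_rfl⟩
  rw [hγ.2.2 s t hs hst ht, edist_dist] at h
  exact (ENNReal.ofReal_le_ofReal_iff (by linarith)).mp h

lemma dist_le_of_forall_dist_le_of_sub_lt {f : ℝ → X} {l ε : ℝ} (hl : 0 ≤ l) (hε : 0 < ε)
    (hf : ∀ s t, 0 ≤ s → s ≤ t → t ≤ l → t - s < ε → dist (f s) (f t) ≤ t - s) :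
    dist (f 0) (f l) ≤ l := by
  obtain ⟨N, hN⟩ := exists_nat_gt (l / ε)
  have hN0 : (0 : ℝ) < N := (div_nonneg hl hε.le).trans_lt hN
  set δ := l / N with hδ
  have hstep : δ < ε := by rw [div_lt_iff₀ hN0]; rwa [div_lt_iff₀ hε, mul_comm] at hN
  have hNδ : N * δ = l := by rw [hδ]; field_simp
  have hlink : ∀ k < N, dist (f (k * δ)) (f ((k + 1 : ℕ) * δ)) ≤ δ := by
    intro k hk
    have hk' : (k + 1 : ℝ) ≤ N := by exact_mod_cast hk
    have hδ0 : 0 ≤ δ := by positivity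
    push_cast
    convert hf (k * δ) ((k + 1) * δ) (by positivity) (by nlinarith) (by nlinarith)
      (by linarith) using 1; ring
  calc dist (f 0) (f l) = dist (f ((0 : ℕ) * δ)) (f (N * δ)) := by simp [hNδ]
    _ ≤ ∑ k ∈ Finset.range N, dist (f (k * δ)) (f ((k + 1 : ℕ) * δ)) :=
        dist_le_range_sum_dist (fun k : ℕ => f (k * δ)) N
    _ ≤ ∑ _k ∈ Finset.range N, δ := Finset.sum_le_sum fun k hk => hlink k (Finset.mem_range.mp hk)
    _ = l := by simp [hNδ]

lemma erealAbsE_coe_sub_coe (r s : ℝ) :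
    erealAbsE ((r : EReal) - (s : EReal)) = ENNReal.ofReal |r - s| := by
  rw [← EReal.coe_sub, erealAbsE, if_neg (by simp only [EReal.coe_ne_top, EReal.coe_ne_bot,
    or_self, not_false_eq_true]), EReal.toReal_coe]

lemma isUpperGradient_one_of_dist_le [MeasurableSpace X] {u : X → ℝ} {ε : ℝ} (hε : 0 < ε)
    (hu : ∀ a b, dist a b < ε → dist (u a) (u b) ≤ dist a b) :
    IsUpperGradient 1 (fun z => (u z : EReal)) := by
  refine ⟨measurable_const, fun γ l hγ => ?_⟩
  simp only [erealAbsE_coe_sub_coe, Pi.one_apply, setLIntegral_one, Real.volume_Icc, sub_zero]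
  refine ENNReal.ofReal_le_ofReal ?_
  rw [← Real.dist_eq]
  refine dist_le_of_forall_dist_le_of_sub_lt (f := u ∘ γ) hγ.1.le hε fun s t hs hst ht hlt => ?_
  have hγst := hγ.dist_le hs hst ht
  exact (hu _ _ (hγst.trans_lt hlt)).trans hγst

lemma locallyLipschitz_of_dist_le {Y : Type*} [PseudoMetricSpace Y] {f : X → Y} {ε : ℝ}
    (hε : 0 < ε) (hf : ∀ a b, dist a b < ε → dist (f a) (f b) ≤ dist a b) :
    LocallyLipschitz f := fun z =>
  ⟨1, ball z (ε / 2), ball_mem_nhds z (half_pos hε), LipschitzOnWith.of_dist_le_mul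
    fun a ha b hb => by
      rw [NNReal.coe_one, one_mul]
      exact hf a b ((dist_triangle_right a b z).trans_lt (by
        rw [mem_ball] at ha hb; linarith))⟩

end UpperGradient

lemma abs_setAverage_sub_le {α : Type*} [MeasurableSpace α] {μ : Measure α} {s t : Set α}
    {u : α → ℝ} (hts : t ⊆ s) (ht : μ t ≠ 0) (hs : μ s ≠ ∞) (hu : IntegrableOn u s μ) (a : ℝ) :
    |⨍ z in t, u z ∂μ - a| ≤ (∫ z in s, |u z - a| ∂μ) / μ.real t := by
  have hut : IntegrableOn u t μ := hu.mono_set hts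
  have htfin : μ t ≠ ∞ := ne_top_of_le_ne_top hs (measure_mono hts)
  have hpos : 0 < μ.real t := ENNReal.toReal_pos ht htfin
  have havg : ⨍ z in t, u z ∂μ - a = (∫ z in t, (u z - a) ∂μ) / μ.real t := by
    rw [integral_sub hut (integrableOn_const htfin), setIntegral_const, setAverage_eq,
      smul_eq_mul, smul_eq_mul]
    field_simp
  rw [havg, abs_div, abs_of_pos hpos]
  gcongr
  calc |∫ z in t, (u z - a) ∂μ| ≤ ∫ z in t, |u z - a| ∂μ := abs_integral_le_integral_abs
    _ ≤ ∫ z in s, |u z - a| ∂μ :=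
        setIntegral_mono_set (hu.sub (integrableOn_const hs)).abs
          (ae_of_all _ fun _ => abs_nonneg _) hts.eventuallyLE

lemma abs_setAverage_sub_le_of_forall {α : Type*} [MeasurableSpace α] {μ : Measure α}
    {u : α → ℝ} {s : Set α} (h0 : μ s ≠ 0) (hs : μ s ≠ ∞) (hu : IntegrableOn u s μ) {a δ : ℝ}
    (h : ∀ z ∈ s, |u z - a| ≤ δ) :
    |⨍ z in s, u z ∂μ - a| ≤ δ := by
  have hpos : 0 < μ.real s := ENNReal.toReal_pos h0 hs
  have hint : ∫ z in s, |u z - a| ∂μ ≤ δ * μ.real s :=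
    (le_abs_self _).trans <| norm_setIntegral_le_of_norm_le_const (f := fun z => |u z - a|)
      hs.lt_top fun z hz => by simpa only [Real.norm_eq_abs, abs_abs] using h z hz
  calc |⨍ z in s, u z ∂μ - a| ≤ (∫ z in s, |u z - a| ∂μ) / μ.real s :=
        abs_setAverage_sub_le subset_rfl h0 hs hu a
    _ ≤ δ := by rwa [div_le_iff₀ hpos]

section Poincare

variable {X : Type*} [MetricSpace X] [MeasurableSpace X] {μ : Measure X} {u : X → ℝ}

lemma BallsPosFinite.measureReal_pos (hμ : BallsPosFinite μ) (c : X) {r : ℝ} (hr : 0 < r) :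
    0 < μ.real (ball c r) :=
  ENNReal.toReal_pos (hμ c r hr).1.ne' (hμ c r hr).2.ne

lemma DoublingWithin.measure_ball_le_pow_mul {x0 : X} {r0 : ℝ} {C : ℝ≥0}
    (hdbl : DoublingWithin μ x0 r0 C) {c : X} {r : ℝ} (hr : 0 < r)
    (hB : ball c r ⊆ ball x0 r0) (k : ℕ) :
    μ (ball c r) ≤ (C : ℝ≥0∞) ^ k * μ (ball c (r / 2 ^ k)) := by
  induction k with
  | zero => simp
  | succ k ih =>
    have hsub : ball c (r / 2 ^ (k + 1)) ⊆ ball x0 r0 :=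
      (ball_subset_ball (div_le_self hr.le (one_le_pow₀ one_le_two))).trans hB
    have h := hdbl c _ (by positivity) hsub
    rw [show 2 * (r / 2 ^ (k + 1)) = r / 2 ^ k by rw [pow_succ]; field_simp] at h
    calc μ (ball c r) ≤ (C : ℝ≥0∞) ^ k * μ (ball c (r / 2 ^ k)) := ih
      _ ≤ (C : ℝ≥0∞) ^ k * (C * μ (ball c (r / 2 ^ (k + 1)))) := by gcongr
      _ = (C : ℝ≥0∞) ^ (k + 1) * μ (ball c (r / 2 ^ (k + 1))) := by ring

lemma DoublingWithin.one_le_s6 {x0 : X} {r0 : ℝ} {C : ℝ≥0} (hdbl : DoublingWithin μ x0 r0 C)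
    (hμ : BallsPosFinite μ) (hr0 : 0 < r0) : 1 ≤ C := by
  have hpos := hμ x0 (r0 / 2) (by positivity)
  have h := hdbl x0 (r0 / 2) (by positivity) (ball_subset_ball (by linarith))
  rw [mul_div_cancel₀ r0 two_ne_zero] at h
  have hle : μ (ball x0 (r0 / 2)) ≤ C * μ (ball x0 (r0 / 2)) :=
    (measure_mono (ball_subset_ball (by linarith))).trans h
  by_contra! hC
  have hlt : (C : ℝ≥0∞) * μ (ball x0 (r0 / 2)) < 1 * μ (ball x0 (r0 / 2)) :=
    ENNReal.mul_lt_mul_left hpos.1.ne' hpos.2.ne (by exact_mod_cast hC)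
  rw [one_mul] at hlt
  exact (hle.trans_lt hlt).false

lemma PoincareBall.integral_abs_sub_setAverage_le {p C lam : ℝ} {c : X} {r : ℝ}
    (hPI : PoincareBall μ 1 p c r C lam) (hμ : BallsPosFinite μ) (hr : 0 < r) (hlam : 1 ≤ lam)
    (hC : 0 ≤ C) (hu : IntegrableOn u (ball c (lam * r)) μ)
    (hug : IsUpperGradient 1 (fun z => (u z : EReal))) :
    ∫ z in ball c r, |u z - ⨍ w in ball c r, u w ∂μ| ∂μ ≤ C * r * μ.real (ball c r) := by
  have hlr : 0 < lam * r := by nlinarith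
  have hfin := (hμ c r hr).2
  have hPI := hPI u 1 hu hug
  simp only [div_one, ENNReal.rpow_one, Pi.one_apply, ENNReal.one_rpow, setLIntegral_one,
    ENNReal.div_self (hμ c _ hlr).1.ne' (hμ c _ hlr).2.ne, mul_one] at hPI
  have hint : IntegrableOn (fun z => |u z - ⨍ w in ball c r, u w ∂μ|) (ball c r) μ :=
    ((hu.mono_set (ball_subset_ball (by nlinarith))).sub (integrableOn_const hfin.ne)).abs
  rw [ENNReal.div_le_iff (hμ c r hr).1.ne' hfin.ne, ← ofReal_integral_eq_lintegral_ofReal hint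
    (ae_of_all _ fun _ => abs_nonneg _), ← ENNReal.ofReal_toReal hfin.ne,
    ← ENNReal.ofReal_mul (by positivity)] at hPI
  exact (ENNReal.ofReal_le_ofReal_iff (by positivity)).mp hPI

lemma tendsto_setAverage_ball {c : X} (hc : ContinuousAt u c) (hμ : BallsPosFinite μ)
    (hu : ∀ r, IntegrableOn u (ball c r) μ) {ρ : ℕ → ℝ} (hρ : Tendsto ρ atTop (𝓝[>] 0)) :
    Tendsto (fun j => ⨍ z in ball c (ρ j), u z ∂μ) atTop (𝓝 (u c)) := by
  rw [Metric.tendsto_nhds]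
  intro δ hδ
  obtain ⟨η, hη, hcη⟩ := Metric.continuousAt_iff.mp hc (δ / 2) (half_pos hδ)
  filter_upwards [hρ (Ioo_mem_nhdsGT hη)] with j ⟨hj0, hjη⟩
  rw [Real.dist_eq]
  refine (abs_setAverage_sub_le_of_forall (hμ c _ hj0).1.ne' (hμ c _ hj0).2.ne (hu _)
    fun z hz => ?_).trans_lt (half_lt_self hδ)
  exact (hcη ((mem_ball.mp hz).trans hjη)).le

variable {p C lam : ℝ} {x0 : X} {r0 : ℝ}

lemma PoincareWithin.abs_setAverage_sub_setAverage_le (hPI : PoincareWithin μ 1 p x0 r0 C lam)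
    (hμ : BallsPosFinite μ) (hlam : 1 ≤ lam) (hC : 0 ≤ C) (hu : ∀ c r, IntegrableOn u (ball c r) μ)
    (hug : IsUpperGradient 1 (fun z => (u z : EReal))) {c c' : X} {r r' : ℝ} (hr : 0 < r)
    (hr' : 0 < r') (hB : ball c r ⊆ ball x0 r0) (hB' : ball c' r' ⊆ ball c r) {K : ℝ≥0}
    (hK : μ (ball c r) ≤ K * μ (ball c' r')) :
    |⨍ z in ball c' r', u z ∂μ - ⨍ z in ball c r, u z ∂μ| ≤ K * C * r := by
  have hpos' := hμ.measureReal_pos c' hr'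
  have hKreal : μ.real (ball c r) ≤ K * μ.real (ball c' r') := by
    have := ENNReal.toReal_mono (ENNReal.mul_ne_top ENNReal.coe_ne_top (hμ c' r' hr').2.ne) hK
    rwa [ENNReal.toReal_mul, ENNReal.coe_toReal] at this
  calc |⨍ z in ball c' r', u z ∂μ - ⨍ z in ball c r, u z ∂μ|
      ≤ (∫ z in ball c r, |u z - ⨍ w in ball c r, u w ∂μ| ∂μ) / μ.real (ball c' r') :=
        abs_setAverage_sub_le hB' (hμ c' r' hr').1.ne' (hμ c r hr).2.ne (hu c r) _
    _ ≤ C * r * μ.real (ball c r) / μ.real (ball c' r') := by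
        gcongr
        exact (hPI c r hr hB).integral_abs_sub_setAverage_le hμ hr hlam hC (hu c _) hug
    _ ≤ K * C * r := by
        rw [div_le_iff₀ hpos']
        calc C * r * μ.real (ball c r) ≤ C * r * (K * μ.real (ball c' r')) := by gcongr
          _ = K * C * r * μ.real (ball c' r') := by ring

/-- Telescope along the balls `B(c, r / 8 ^ j)`: by doubling their measures shrink by at most
the factor `Cμ ^ 3` per step, so consecutive averages differ by at most `Cμ ^ 3 C r / 8 ^ j`,
and `∑ 8 ^ (-j) = 8 / 7`. -/
lemma PoincareWithin.abs_sub_setAverage_ball_le (hPI : PoincareWithin μ 1 p x0 r0 C lam)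
    {Cμ : ℝ≥0} (hdbl : DoublingWithin μ x0 r0 Cμ) (hμ : BallsPosFinite μ) (hlam : 1 ≤ lam)
    (hC : 0 ≤ C) (hu : ∀ c r, IntegrableOn u (ball c r) μ)
    (hug : IsUpperGradient 1 (fun z => (u z : EReal))) {c : X} (hc : ContinuousAt u c) {r : ℝ}
    (hr : 0 < r) (hB : ball c r ⊆ ball x0 r0) :
    |u c - ⨍ z in ball c r, u z ∂μ| ≤ 8 / 7 * Cμ ^ 3 * C * r := by
  set a : ℕ → ℝ := fun j => ⨍ z in ball c (r / 8 ^ j), u z ∂μ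
  have hrj : ∀ j : ℕ, 0 < r / 8 ^ j := fun j => by positivity
  have hBj : ∀ j : ℕ, ball c (r / 8 ^ j) ⊆ ball x0 r0 := fun j =>
    (ball_subset_ball (div_le_self hr.le (one_le_pow₀ (by norm_num)))).trans hB
  have hnext : ∀ j : ℕ, r / 8 ^ j / 2 ^ 3 = r / 8 ^ (j + 1) := fun j => by ring
  have hstep : ∀ j, dist (a j) (a (j + 1)) ≤ Cμ ^ 3 * C * r * (1 / 8) ^ j := by
    intro j
    have hK := hdbl.measure_ball_le_pow_mul (hrj j) (hBj j) 3
    rw [hnext] at hK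
    have := hPI.abs_setAverage_sub_setAverage_le hμ hlam hC hu hug (hrj j) (hrj (j + 1))
      (hBj j) (ball_subset_ball (by rw [← hnext]; exact div_le_self (hrj j).le (by norm_num)))
      (K := Cμ ^ 3) (by exact_mod_cast hK)
    rw [dist_comm, Real.dist_eq]
    convert this using 1
    push_cast
    rw [one_div_pow]
    ring
  have hlim : Tendsto a atTop (𝓝 (u c)) := by
    refine tendsto_setAverage_ball hc hμ (hu c) (tendsto_nhdsWithin_iff.mpr ⟨?_, ?_⟩)
    · exact tendsto_const_nhds.div_atTop (tendsto_pow_atTop_atTop_of_one_lt (by norm_num))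
    · exact Eventually.of_forall hrj
  have := dist_le_of_le_geometric_of_tendsto₀ (1 / 8) _ (by norm_num) hstep hlim
  rw [dist_comm, Real.dist_eq] at this
  convert this using 2
  · simp [a]
  · ring

end Poincare

section ChainBound

variable {X : Type*} [MetricSpace X] {ε : ℝ} {x y a b : X}

lemma dist_truncateToReal_chainDist_le {t : ℝ≥0∞} (ht : t ≠ ∞) (x : X) (hab : dist a b < ε) :
    dist (truncateToReal t (chainDist ε x a)) (truncateToReal t (chainDist ε x b)) ≤
      dist a b := by
  rw [Real.dist_eq, abs_sub_le_iff]
  constructor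
  · have := ENNReal.truncateToReal_le_add_of_le_add ht dist_nonneg
      (chainDist_le_add_dist (x := x) (by rwa [dist_comm]))
    rw [dist_comm] at this
    linarith
  · have := ENNReal.truncateToReal_le_add_of_le_add ht dist_nonneg
      (chainDist_le_add_dist (x := x) hab)
    linarith

lemma le_ofReal_of_truncateToReal_le {M s : ℝ} {e : ℝ≥0∞}
    (he : truncateToReal (ENNReal.ofReal M) e ≤ s) (hsM : s < M) : e ≤ ENNReal.ofReal s := by
  rcases le_total e (ENNReal.ofReal M) with h | h
  · rw [truncateToReal_eq_toReal ENNReal.ofReal_ne_top h] at he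
    rw [← ENNReal.ofReal_toReal (ne_top_of_le_ne_top ENNReal.ofReal_ne_top h)]
    exact ENNReal.ofReal_le_ofReal he
  · have hM : 0 ≤ M := truncateToReal_nonneg.trans (he.trans hsM.le)
    rw [truncateToReal, min_eq_left h, ENNReal.toReal_ofReal hM] at he
    exact absurd hsM he.not_gt

variable [MeasurableSpace X] [BorelSpace X] {μ : Measure X}

lemma BallsPosFinite.integrableOn_ball {u : X → ℝ} (hμ : BallsPosFinite μ) (hu : Continuous u)
    {M : ℝ} (hM : ∀ z, |u z| ≤ M) (c : X) (r : ℝ) : IntegrableOn u (ball c r) μ := by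
  rcases le_or_gt r 0 with hr | hr
  · simp [ball_eq_empty.mpr hr]
  · exact Measure.integrableOn_of_bounded (hμ c r hr).2.ne hu.aestronglyMeasurable
      (ae_of_all _ hM)

/-- The truncated `ε`-chain distance `u` from `x` vanishes at `x` and has upper gradient `1`;
`u y` is bounded by the telescoped estimates at `x` (radius `2 d(x, y)`) and at `y`
(radius `d(x, y)`) plus the difference of the two ball averages. -/
theorem chainDist_le_of_poincareWithin (hμ : BallsPosFinite μ) (hxy : x ≠ y) {p C lam : ℝ}
    (hPI : PoincareWithin μ 1 p x (2 * dist x y) C lam) (hlam : 1 ≤ lam) (hC : 0 ≤ C)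
    {Cμ : ℝ≥0} (hdbl : DoublingWithin μ x (2 * dist x y) Cμ) (hε : 0 < ε) :
    chainDist ε x y ≤ ENNReal.ofReal ((24 / 7 * Cμ ^ 3 + 2 * Cμ ^ 2) * C * dist x y) := by
  set d := dist x y
  have hd : 0 < d := dist_pos.mpr hxy
  set S := (24 / 7 * Cμ ^ 3 + 2 * Cμ ^ 2) * C * d
  set u : X → ℝ := fun z => truncateToReal (ENNReal.ofReal (S + 1)) (chainDist ε x z)
  have hloc : ∀ a b, dist a b < ε → dist (u a) (u b) ≤ dist a b := fun a b =>
    dist_truncateToReal_chainDist_le ENNReal.ofReal_ne_top x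
  have hcont : Continuous u := (locallyLipschitz_of_dist_le hε hloc).continuous
  have hint := hμ.integrableOn_ball hcont fun z => by
    rw [abs_of_nonneg truncateToReal_nonneg]
    exact truncateToReal_le ENNReal.ofReal_ne_top
  have hug := isUpperGradient_one_of_dist_le hε hloc
  have hyB : ball y d ⊆ ball x (2 * d) := ball_subset_ball' (by rw [dist_comm, two_mul])
  have hK : μ (ball x (2 * d)) ≤ ((Cμ ^ 2 : ℝ≥0) : ℝ≥0∞) * μ (ball y d) := by
    calc μ (ball x (2 * d)) ≤ Cμ * μ (ball x d) :=
          hdbl x d hd (ball_subset_ball (by linarith))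
      _ ≤ Cμ * μ (ball y (2 * d)) := by
          gcongr; exact ball_subset_ball' (two_mul d).symm.le
      _ ≤ Cμ * (Cμ * μ (ball y d)) := by gcongr; exact hdbl y d hd hyB
      _ = ((Cμ ^ 2 : ℝ≥0) : ℝ≥0∞) * μ (ball y d) := by push_cast; ring
  have hx := hPI.abs_sub_setAverage_ball_le hdbl hμ hlam hC hint hug hcont.continuousAt
    (by positivity) subset_rfl
  have hy := hPI.abs_sub_setAverage_ball_le hdbl hμ hlam hC hint hug hcont.continuousAt hd hyB
  have hbridge := hPI.abs_setAverage_sub_setAverage_le hμ hlam hC hint hug (by positivity) hd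
    subset_rfl hyB hK
  have hux : u x = 0 := by simp [u, truncateToReal]
  have huy : u y ≤ S := by
    rw [hux] at hx
    push_cast at hbridge
    simp only [S]
    linarith [abs_le.mp hx, abs_le.mp hy, abs_le.mp hbridge]
  exact le_ofReal_of_truncateToReal_le huy (lt_add_one S)

end ChainBound

lemma IsCompact.exists_ultrafilter_tendsto {X ι α : Type*} [TopologicalSpace X] {K : Set X}
    (hK : IsCompact K) {l : Filter ι} [l.NeBot] {f : ι → α → X}
    (hf : ∀ t, ∀ᶠ n in l, f n t ∈ K) :
    ∃ (F : Ultrafilter ι) (Γ : α → X), ↑F ≤ l ∧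
      ∀ t, Γ t ∈ K ∧ Tendsto (fun n => f n t) F (𝓝 (Γ t)) := by
  have hF : ↑(Ultrafilter.of l) ≤ l := Ultrafilter.of_le l
  choose Γ hΓ using fun t => hK.ultrafilter_le_nhds ((Ultrafilter.of l).map (f · t))
    (le_principal_iff.mpr (hF (hf t)))
  exact ⟨Ultrafilter.of l, Γ, hF, hΓ⟩

lemma LipschitzOnWith.eVariationOn_Icc_le {E : Type*} [PseudoEMetricSpace E] {f : ℝ → E}
    {K : ℝ≥0} {a b : ℝ} (hf : LipschitzOnWith K f (Icc a b)) :
    eVariationOn f (Icc a b) ≤ K * ENNReal.ofReal (b - a) := by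
  simpa using hf.comp_eVariationOn_le (g := id) (mapsTo_id _)

section Curves

variable {X : Type*} [MetricSpace X] {ε : ℝ} {x y : X}

/-- Run through the chain at the speed of its length: at time `t` sit at the last point whose
distance along the chain from `w 0` is at most `t` times the total length. -/
lemma exists_path_of_chain {n : ℕ} {w : ℕ → X} (hε : 0 < ε)
    (hw : ∀ i < n, dist (w i) (w (i + 1)) < ε) :
    ∃ γ : ℝ → X, γ 0 = w 0 ∧ γ 1 = w n ∧
      (∀ t, dist (w 0) (γ t) ≤ ∑ i ∈ Finset.range n, dist (w i) (w (i + 1))) ∧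
      ∀ s t, 0 ≤ s → s ≤ t → t ≤ 1 →
        dist (γ s) (γ t) ≤ (∑ i ∈ Finset.range n, dist (w i) (w (i + 1))) * (t - s) + ε := by
  classical
  set T : ℕ → ℝ := fun k => ∑ i ∈ Finset.range k, dist (w i) (w (i + 1))
  set idx : ℝ → ℕ := fun τ => Nat.findGreatest (fun k => T k ≤ τ) n
  have hT0 : T 0 = 0 := Finset.sum_range_zero _
  have hTmono : Monotone T := fun i j hij =>
    Finset.sum_le_sum_of_subset_of_nonneg (Finset.range_subset_range.mpr hij)
      fun _ _ _ => dist_nonneg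
  have hdist : ∀ i j, i ≤ j → dist (w i) (w j) ≤ T j - T i := fun i j hij =>
    (dist_le_Ico_sum_dist w hij).trans_eq (Finset.sum_Ico_eq_sub _ hij)
  have hidx_le : ∀ τ, idx τ ≤ n := fun τ => Nat.findGreatest_le n
  have hT_idx : ∀ τ, 0 ≤ τ → T (idx τ) ≤ τ := fun τ hτ =>
    Nat.findGreatest_spec (P := fun k => T k ≤ τ) (Nat.zero_le n) (by simpa [hT0] using hτ)
  have hlt_T_idx : ∀ τ, τ ≤ T n → τ < T (idx τ) + ε := by
    intro τ hτ
    rcases (hidx_le τ).lt_or_eq with hlt | heq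
    · have hnext : τ < T (idx τ + 1) :=
        not_le.mp (Nat.findGreatest_is_greatest (Nat.lt_succ_self _) hlt)
      have hlink := hw _ hlt
      simp only [T, Finset.sum_range_succ] at hnext ⊢
      linarith
    · rw [heq]; linarith
  refine ⟨fun t => w (idx (t * T n)), ?_, ?_, ?_, ?_⟩
  · show w (idx (0 * T n)) = w 0
    rw [zero_mul]
    exact (dist_le_zero.mp ((hdist 0 _ (Nat.zero_le _)).trans
      (by linarith [hT_idx 0 le_rfl]))).symm
  · simp only [one_mul]
    rw [le_antisymm (hidx_le _) (Nat.le_findGreatest le_rfl le_rfl)]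
  · intro t
    exact (hdist 0 _ (Nat.zero_le _)).trans (by linarith [hTmono (hidx_le (t * T n))])
  · intro s t hs hst ht
    have hTn : 0 ≤ T n := hT0 ▸ hTmono (Nat.zero_le n)
    have hij : idx (s * T n) ≤ idx (t * T n) :=
      Nat.findGreatest_mono_left (fun k hk => hk.trans (by nlinarith)) n
    have h1 := hT_idx (t * T n) (by nlinarith)
    have h2 := hlt_T_idx (s * T n) (by nlinarith)
    calc dist (w (idx (s * T n))) (w (idx (t * T n)))
        ≤ T (idx (t * T n)) - T (idx (s * T n)) := hdist _ _ hij
      _ ≤ T n * (t - s) + ε := by linarith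

lemma exists_path_of_chainDist_lt (hε : 0 < ε) {ℓ : ℝ} (h : chainDist ε x y < ENNReal.ofReal ℓ) :
    ∃ γ : ℝ → X, γ 0 = x ∧ γ 1 = y ∧ (∀ t, dist x (γ t) ≤ ℓ) ∧
      ∀ s t, 0 ≤ s → s ≤ t → t ≤ 1 → dist (γ s) (γ t) ≤ ℓ * (t - s) + ε := by
  obtain ⟨n, w, rfl, rfl, hw, hlen⟩ := exists_chain_of_chainDist_lt h
  obtain ⟨γ, h0, h1, hstart, hlip⟩ := exists_path_of_chain hε hw
  refine ⟨γ, h0, h1, fun t => (hstart t).trans hlen.le, fun s t hs hst ht => ?_⟩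
  have := hlip s t hs hst ht
  nlinarith

lemma lipschitzOnWith_Icc_of_dist_le {f : ℝ → X} {a b L : ℝ}
    (hf : ∀ s t, a ≤ s → s ≤ t → t ≤ b → dist (f s) (f t) ≤ L * (t - s)) :
    LipschitzOnWith (Real.toNNReal L) f (Icc a b) := by
  refine LipschitzOnWith.of_dist_le_mul fun s hs t ht => ?_
  rcases le_total s t with hst | hts
  · rw [Real.dist_eq, abs_of_nonpos (by linarith), neg_sub]
    exact (hf s t hs.1 hst ht.2).trans
      (mul_le_mul_of_nonneg_right (Real.le_coe_toNNReal L) (by linarith))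
  · rw [dist_comm, Real.dist_eq, abs_of_nonneg (by linarith)]
    exact (hf t s ht.1 hts hs.2).trans
      (mul_le_mul_of_nonneg_right (Real.le_coe_toNNReal L) (by linarith))

/-- Paths run along ever finer chains converge, pointwise along an ultrafilter, to a curve; the
almost-Lipschitz bounds of the paths pass to the limit as a genuine Lipschitz bound. -/
theorem exists_connectsInWithLength_of_chainDist_le {K : Set X} (hK : IsCompact K) {r S : ℝ}
    (hS : 0 ≤ S) (hSr : S < r) (hKr : ball x r ⊆ K)
    (h : ∀ ε > 0, chainDist ε x y ≤ ENNReal.ofReal S) :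
    ∃ γ : ℝ → X, ConnectsInWithLength γ x y K (ENNReal.ofReal S) := by
  set η : ℕ → ℝ := fun m => 1 / (m + 1)
  have hη : ∀ m, 0 < η m := fun m => Nat.one_div_pos_of_nat
  have hη0 : Tendsto η atTop (𝓝 0) := tendsto_one_div_add_atTop_nhds_zero_nat
  have hpath : ∀ m, ∃ γ : ℝ → X, γ 0 = x ∧ γ 1 = y ∧ (∀ t, dist x (γ t) ≤ S + η m) ∧
      ∀ s t, 0 ≤ s → s ≤ t → t ≤ 1 → dist (γ s) (γ t) ≤ (S + η m) * (t - s) + η m :=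
    fun m => exists_path_of_chainDist_lt (hη m) ((h _ (hη m)).trans_lt
      ((ENNReal.ofReal_lt_ofReal_iff (by linarith [hη m])).mpr (by linarith [hη m])))
  choose γ hγ0 hγ1 hγx hγlip using hpath
  have hγK : ∀ t, ∀ᶠ m in atTop, γ m t ∈ K := fun t => by
    filter_upwards [(tendsto_const_nhds.add hη0).eventually (gt_mem_nhds (by simpa using hSr))]
      with m hm
    exact hKr (mem_ball'.mpr ((hγx m t).trans_lt hm))
  obtain ⟨F, Γ, hF, hΓ⟩ := hK.exists_ultrafilter_tendsto hγK
  have hΓ0 : Γ 0 = x := tendsto_nhds_unique (hΓ 0).2 (by simp [hγ0])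
  have hΓ1 : Γ 1 = y := tendsto_nhds_unique (hΓ 1).2 (by simp [hγ1])
  have hΓlip : LipschitzOnWith (Real.toNNReal S) Γ (Icc 0 1) := by
    refine lipschitzOnWith_Icc_of_dist_le fun s t hs hst ht => ?_
    have hlim : Tendsto (fun m => (S + η m) * (t - s) + η m) atTop (𝓝 (S * (t - s))) := by
      simpa using ((tendsto_const_nhds.add hη0).mul_const (t - s)).add hη0
    exact le_of_tendsto_of_tendsto' ((hΓ s).2.dist (hΓ t).2) (hlim.mono_left hF)
      fun m => hγlip m s t hs hst ht
  refine ⟨Γ, hΓlip.continuousOn, hΓ0, hΓ1, fun t _ => (hΓ t).1, ?_⟩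
  simpa [ENNReal.ofReal] using hΓlip.eVariationOn_Icc_le

end Curves

lemma ConnectsInWithLength.mono {X : Type*} [PseudoMetricSpace X] {γ : ℝ → X} {x y : X}
    {A : Set X} {ℓ ℓ' : ℝ≥0∞} (h : ConnectsInWithLength γ x y A ℓ) (hℓ : ℓ ≤ ℓ') :
    ConnectsInWithLength γ x y A ℓ' :=
  ⟨h.1, h.2.1, h.2.2.1, h.2.2.2.1, h.2.2.2.2.trans hℓ⟩

theorem connecting_curve_of_local_poincare_general
    {X : Type*} [MetricSpace X] [MeasurableSpace X] [BorelSpace X]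
    (μ : Measure X) (hμ : BallsPosFinite μ) (p : ℝ)
    (x y : X) (hxy : x ≠ y)
    (Cμ : ℝ≥0) (CPI lam : ℝ) (hCPI : 0 < CPI) (hlam : 1 ≤ lam)
    (hdbl : DoublingWithin μ x (2 * dist x y) Cμ)
    (hPI : PoincareWithin μ 1 p x (2 * dist x y) CPI lam)
    (Λ L : ℝ) (hΛ : Λ = 3 * (Cμ : ℝ) ^ 3 * CPI) (hL : L = 9 * Λ)
    (hcpt : IsCompact (closure (ball x (Λ * (2 * dist x y))))) :
    ∃ γ : ℝ → X, ConnectsInWithLength γ x y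
      (closure (ball x (Λ * (2 * dist x y)))) (ENNReal.ofReal (L * dist x y)) := by
  have hd : 0 < dist x y := dist_pos.mpr hxy
  have hCμ : 1 ≤ (Cμ : ℝ) := by exact_mod_cast hdbl.one_le_s6 hμ (by positivity)
  set S := (24 / 7 * (Cμ : ℝ) ^ 3 + 2 * Cμ ^ 2) * CPI * dist x y with hS
  have hS6 : S < 6 * (Cμ : ℝ) ^ 3 * CPI * dist x y := by
    have : 0 < 18 / 7 * (Cμ : ℝ) ^ 3 - 2 * Cμ ^ 2 := by nlinarith
    have : 0 < (18 / 7 * (Cμ : ℝ) ^ 3 - 2 * Cμ ^ 2) * CPI * dist x y := by positivity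
    linarith
  have hΛd : 0 ≤ (Cμ : ℝ) ^ 3 * CPI * dist x y := by positivity
  obtain ⟨γ, hγ⟩ := exists_connectsInWithLength_of_chainDist_le hcpt (by positivity)
    (by rw [hΛ]; linarith) subset_closure
    fun ε hε => chainDist_le_of_poincareWithin hμ hxy hPI hlam hCPI.le hdbl hε
  exact ⟨γ, hγ.mono (ENNReal.ofReal_le_ofReal (by rw [hL, hΛ]; linarith))⟩

/-- If the `p`-Poincaré inequality (constant `CPI`, dilation `lam`) and the
doubling property (constant `Cμ`) hold within `B0 = B(x, 2 d(x,y))`, `Λ = 3 Cμ³ CPI`, and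
the closure of `Λ B0` is compact, then `x` and `y` can be connected by a curve in the
closure of `Λ B0` of length at most `L d(x,y)` with `L = 9Λ`. -/
theorem connecting_curve_of_local_poincare
    {X : Type*} [MetricSpace X] [MeasurableSpace X] [BorelSpace X]
    (μ : Measure X) (hμ : BallsPosFinite μ) (p : ℝ) (hp : 1 ≤ p)
    (x y : X) (hxy : x ≠ y)
    (Cμ : ℝ≥0) (CPI lam : ℝ) (hCPI : 0 < CPI) (hlam : 1 ≤ lam)
    (hdbl : DoublingWithin μ x (2 * dist x y) Cμ)
    (hPI : PoincareWithin μ 1 p x (2 * dist x y) CPI lam)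
    (Λ L : ℝ) (hΛ : Λ = 3 * (Cμ : ℝ) ^ 3 * CPI) (hL : L = 9 * Λ)
    (hcpt : IsCompact (closure (ball x (Λ * (2 * dist x y))))) :
    ∃ γ : ℝ → X, ConnectsInWithLength γ x y
      (closure (ball x (Λ * (2 * dist x y)))) (ENNReal.ofReal (L * dist x y)) :=
  connecting_curve_of_local_poincare_general μ hμ p x y hxy Cμ CPI lam hCPI hlam hdbl hPI Λ L hΛ hL
    hcpt
end

section
/- Let 1 ≤ q < ∞ and let A, E ⊆ X be measurable sets of finite positive measure such that μ(A ∩ E) ≥ θ μ(E) > 0 for some θ > 0. Assume that u ∈ L^q(A ∪ E) and that for some Q ≥ 0, ‖u − u_A‖_{L^q(A)} ≤ Q and ‖u − u_E‖_{L^q(E)} ≤ Q. Then ‖u − u_{A∪E}‖_{L^q(A∪E)} ≤ 4(1 + θ^{−1/q}) Q. -/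
open MeasureTheory Metric Set ENNReal NNReal Filter

/-! Replacing the mean of `u` over a set by any other constant at most doubles the `L^q`
deviation, because averaging is an `L^q` contraction. On `A ∩ E` both `u_A` and `u_E` are
`L^q`-close to `u`, so `|u_E - u_A| μ(A ∩ E)^{1/q} ≤ 2Q`; as `A ∩ E` carries a `θ`-fraction of
the mass of `E`, the constant `u_E - u_A` has `L^q(E)`-norm at most `2 θ^{-1/q} Q`. Hence `u`
deviates from the single constant `u_A` by at most `2 (1 + θ^{-1/q}) Q` on `A ∪ E`, and passing
to the mean over `A ∪ E` doubles this. -/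

section

variable {α E : Type*} [MeasurableSpace α] [NormedAddCommGroup E] {μ ν : Measure α}
  {p : ℝ≥0∞} {f : α → E}

theorem eLpNorm_const_sub_le (hf : AEStronglyMeasurable f ν) (hp : 1 ≤ p) (c c' : E) :
    eLpNorm (fun _ => c' - c) p ν
      ≤ eLpNorm (fun x => f x - c) p ν + eLpNorm (fun x => f x - c') p ν := by
  have hsplit : (fun _ => c' - c) = (fun x => f x - c) - fun x => f x - c' := by
    ext x
    simp
  rw [hsplit]
  exact eLpNorm_sub_le (hf.sub aestronglyMeasurable_const) (hf.sub aestronglyMeasurable_const) hp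

theorem eLpNorm_sub_const_le (hf : AEStronglyMeasurable f ν) (hp : 1 ≤ p) (c c' : E) :
    eLpNorm (fun x => f x - c) p ν
      ≤ eLpNorm (fun x => f x - c') p ν + eLpNorm (fun _ => c' - c) p ν := by
  have hsplit : (fun x => f x - c) = (fun x => f x - c') + fun _ => c' - c := by
    ext x
    simp
  rw [hsplit]
  exact eLpNorm_add_le (hf.sub aestronglyMeasurable_const) aestronglyMeasurable_const hp

theorem eLpNorm_const_restrict (hp0 : p ≠ 0) (hp_top : p ≠ ∞) (c : E) (s : Set α) :
    eLpNorm (fun _ => c) p (μ.restrict s) = ‖c‖ₑ * μ s ^ (1 / p.toReal) := by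
  rw [eLpNorm_const' c hp0 hp_top, Measure.restrict_apply_univ]

theorem eLpNorm_add_measure_le (hp : 1 ≤ p) (hp_top : p ≠ ∞) (f : α → E) :
    eLpNorm f p (μ + ν) ≤ eLpNorm f p μ + eLpNorm f p ν := by
  have hq : 1 ≤ p.toReal := ENNReal.toReal_mono hp_top hp
  have hq0 : p.toReal ≠ 0 := (zero_lt_one.trans_le hq).ne'
  simp only [eLpNorm_eq_lintegral_rpow_enorm_toReal (zero_lt_one.trans_le hp).ne' hp_top,
    lintegral_add_measure]
  set I := ∫⁻ x, ‖f x‖ₑ ^ p.toReal ∂μ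
  set J := ∫⁻ x, ‖f x‖ₑ ^ p.toReal ∂ν
  calc (I + J) ^ (1 / p.toReal)
      = ((I ^ (1 / p.toReal)) ^ p.toReal + (J ^ (1 / p.toReal)) ^ p.toReal) ^ (1 / p.toReal) := by
        simp only [← ENNReal.rpow_mul, one_div_mul_cancel hq0, ENNReal.rpow_one]
    _ ≤ I ^ (1 / p.toReal) + J ^ (1 / p.toReal) := ENNReal.rpow_add_rpow_le_add _ _ hq

theorem eLpNorm_restrict_union_le (hp : 1 ≤ p) (hp_top : p ≠ ∞) (f : α → E) (s t : Set α) :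
    eLpNorm f p (μ.restrict (s ∪ t)) ≤ eLpNorm f p (μ.restrict s) + eLpNorm f p (μ.restrict t) :=
  (eLpNorm_mono_measure f (Measure.restrict_union_le s t)).trans
    (eLpNorm_add_measure_le hp hp_top f)

variable [NormedSpace ℝ E] [CompleteSpace E]

/-- Averaging is the conditional expectation onto the trivial σ-algebra. -/
theorem eLpNorm_const_average_le (f : α → E) (hp : 1 ≤ p) :
    eLpNorm (fun _ => ⨍ x, f x ∂ν) p ν ≤ eLpNorm f p ν := by
  rcases eq_zero_or_neZero ν with rfl | _
  · simp
  · have h := eLpNorm_condExp_le_eLpNorm (m := ⊥) (μ := ν) f hp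
    rw [condExp_bot'] at h
    simpa only [average_eq] using h

theorem average_sub_const [IsFiniteMeasure ν] [NeZero ν] (hf : Integrable f ν) (c : E) :
    ⨍ x, (f x - c) ∂ν = ⨍ x, f x ∂ν - c := by
  rw [average_eq, integral_sub hf (integrable_const c), smul_sub, ← average_eq, ← average_eq,
    average_const]

theorem eLpNorm_sub_average_le_two_mul [IsFiniteMeasure ν] (hf : Integrable f ν) (hp : 1 ≤ p)
    (c : E) :
    eLpNorm (fun x => f x - ⨍ y, f y ∂ν) p ν ≤ 2 * eLpNorm (fun x => f x - c) p ν := by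
  rcases eq_zero_or_neZero ν with rfl | _
  · simp
  have hsplit : (fun x => f x - ⨍ y, f y ∂ν)
      = (fun x => f x - c) - fun _ => ⨍ y, (f y - c) ∂ν := by
    ext x
    simp [average_sub_const hf]
  rw [hsplit, two_mul]
  calc _ ≤ eLpNorm (fun x => f x - c) p ν + eLpNorm (fun _ => ⨍ y, (f y - c) ∂ν) p ν :=
        eLpNorm_sub_le (hf.sub (integrable_const c)).1 aestronglyMeasurable_const hp
    _ ≤ _ := by grw [eLpNorm_const_average_le (fun y => f y - c) hp]

theorem eLpNorm_sub_setAverage_union_le (hp : 1 ≤ p) (hp_top : p ≠ ∞) {s t : Set α}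
    (hst : μ (s ∪ t) ≠ ∞) (hf : IntegrableOn f (s ∪ t) μ) {κ Q : ℝ≥0∞}
    (hover : μ t ^ (1 / p.toReal) ≤ κ * μ (s ∩ t) ^ (1 / p.toReal)) {a e : E}
    (hs : eLpNorm (fun x => f x - a) p (μ.restrict s) ≤ Q)
    (ht : eLpNorm (fun x => f x - e) p (μ.restrict t) ≤ Q) :
    eLpNorm (fun x => f x - ⨍ y in s ∪ t, f y ∂μ) p (μ.restrict (s ∪ t))
      ≤ 4 * (1 + κ) * Q := by
  have hp0 : p ≠ 0 := (zero_lt_one.trans_le hp).ne'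
  have : IsFiniteMeasure (μ.restrict (s ∪ t)) := isFiniteMeasure_restrict.2 hst
  have hf_st : AEStronglyMeasurable f (μ.restrict (s ∩ t)) :=
    hf.1.mono_measure (Measure.restrict_mono (inter_subset_left.trans subset_union_left) le_rfl)
  have hf_t : AEStronglyMeasurable f (μ.restrict t) :=
    hf.1.mono_measure (Measure.restrict_mono subset_union_right le_rfl)
  have hjump : eLpNorm (fun _ => e - a) p (μ.restrict t) ≤ κ * (Q + Q) := by
    calc eLpNorm (fun _ => e - a) p (μ.restrict t)
        ≤ κ * eLpNorm (fun _ => e - a) p (μ.restrict (s ∩ t)) := by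
          simp only [eLpNorm_const_restrict hp0 hp_top]
          grw [hover, mul_left_comm]
      _ ≤ κ * (eLpNorm (fun x => f x - a) p (μ.restrict (s ∩ t))
            + eLpNorm (fun x => f x - e) p (μ.restrict (s ∩ t))) := by
          grw [eLpNorm_const_sub_le hf_st hp a e]
      _ ≤ κ * (Q + Q) := by
          gcongr
          · exact (eLpNorm_mono_measure _ (Measure.restrict_mono inter_subset_left le_rfl)).trans hs
          · exact (eLpNorm_mono_measure _ (Measure.restrict_mono inter_subset_right le_rfl)).trans ht
  have hunion : eLpNorm (fun x => f x - a) p (μ.restrict (s ∪ t)) ≤ Q + (Q + κ * (Q + Q)) :=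
    (eLpNorm_restrict_union_le hp hp_top _ s t).trans
      (add_le_add hs ((eLpNorm_sub_const_le hf_t hp a e).trans (add_le_add ht hjump)))
  calc _ ≤ 2 * eLpNorm (fun x => f x - a) p (μ.restrict (s ∪ t)) :=
        eLpNorm_sub_average_le_two_mul hf hp a
    _ ≤ 2 * (Q + (Q + κ * (Q + Q))) := by grw [hunion]
    _ = 4 * (1 + κ) * Q := by ring

end

theorem eLpNorm_ofReal_eq_lintegral_rpow_abs {α : Type*} [MeasurableSpace α] {μ : Measure α}
    {q : ℝ} (hq : 0 < q) (f : α → ℝ) :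
    eLpNorm f (ENNReal.ofReal q) μ = (∫⁻ x, ENNReal.ofReal |f x| ^ q ∂μ) ^ (1 / q) := by
  simp only [eLpNorm_eq_lintegral_rpow_enorm_toReal (ENNReal.ofReal_pos.2 hq).ne'
    ENNReal.ofReal_ne_top, ENNReal.toReal_ofReal hq.le, Real.enorm_eq_ofReal_abs]

theorem ENNReal.rpow_le_ofReal_rpow_neg_mul_of_ofReal_mul_le {x y : ℝ≥0∞} {θ q : ℝ}
    (hθ : 0 < θ) (hq : 0 ≤ q) (h : ENNReal.ofReal θ * x ≤ y) :
    x ^ (1 / q) ≤ ENNReal.ofReal (θ ^ (-1 / q)) * y ^ (1 / q) := by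
  have hq' : 0 ≤ 1 / q := one_div_nonneg.2 hq
  calc x ^ (1 / q) = ENNReal.ofReal (θ ^ (-1 / q)) * (ENNReal.ofReal θ * x) ^ (1 / q) := by
        rw [ENNReal.mul_rpow_of_nonneg _ _ hq', ENNReal.ofReal_rpow_of_pos hθ, ← mul_assoc,
          ← ENNReal.ofReal_mul (Real.rpow_nonneg hθ.le _), ← Real.rpow_add hθ, neg_div,
          neg_add_cancel, Real.rpow_zero, ENNReal.ofReal_one, one_mul]
    _ ≤ ENNReal.ofReal (θ ^ (-1 / q)) * y ^ (1 / q) := by gcongr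

theorem glueing_lemma_for_means_general
    {X : Type*} [MeasurableSpace X]
    (μ : Measure X) (q : ℝ) (hq1 : 1 ≤ q)
    (A E : Set X)
    (hAfin : μ A < ⊤) (hEfin : μ E < ⊤)
    (θ : ℝ) (hθ : 0 < θ)
    (hover : ENNReal.ofReal θ * μ E ≤ μ (A ∩ E))
    (u : X → ℝ) (hu : MemLp u (ENNReal.ofReal q) (μ.restrict (A ∪ E)))
    (Q : ℝ)
    (hQA : (∫⁻ x in A, ENNReal.ofReal |u x - ⨍ z in A, u z ∂μ| ^ q ∂μ) ^ (1/q)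
      ≤ ENNReal.ofReal Q)
    (hQE : (∫⁻ x in E, ENNReal.ofReal |u x - ⨍ z in E, u z ∂μ| ^ q ∂μ) ^ (1/q)
      ≤ ENNReal.ofReal Q) :
    (∫⁻ x in A ∪ E, ENNReal.ofReal |u x - ⨍ z in A ∪ E, u z ∂μ| ^ q ∂μ) ^ (1/q)
      ≤ ENNReal.ofReal (4 * (1 + θ ^ (-1/q)) * Q) := by
  have hq0 : 0 < q := zero_lt_one.trans_le hq1
  have hp1 : 1 ≤ ENNReal.ofReal q := ENNReal.one_le_ofReal.2 hq1
  have hfin : μ (A ∪ E) ≠ ∞ := (measure_union_lt_top hAfin hEfin).ne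
  have : IsFiniteMeasure (μ.restrict (A ∪ E)) := isFiniteMeasure_restrict.2 hfin
  have hover' : μ E ^ (1 / (ENNReal.ofReal q).toReal)
      ≤ ENNReal.ofReal (θ ^ (-1 / q)) * μ (A ∩ E) ^ (1 / (ENNReal.ofReal q).toReal) := by
    rw [ENNReal.toReal_ofReal hq0.le]
    exact ENNReal.rpow_le_ofReal_rpow_neg_mul_of_ofReal_mul_le hθ hq0.le hover
  have hbound : ENNReal.ofReal (4 * (1 + θ ^ (-1 / q)) * Q)
      = 4 * (1 + ENNReal.ofReal (θ ^ (-1 / q))) * ENNReal.ofReal Q := by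
    have ht : 0 ≤ θ ^ (-1 / q) := Real.rpow_nonneg hθ.le _
    rw [ENNReal.ofReal_mul (by positivity), ENNReal.ofReal_mul (by norm_num),
      ENNReal.ofReal_add zero_le_one ht, ENNReal.ofReal_one, ENNReal.ofReal_ofNat]
  rw [← eLpNorm_ofReal_eq_lintegral_rpow_abs hq0] at hQA hQE ⊢
  rw [hbound]
  exact eLpNorm_sub_setAverage_union_le hp1 ENNReal.ofReal_ne_top hfin (hu.integrable hp1) hover'
    hQA hQE

/-- glueing lemma for `L^q`-deviations from means: if `μ(A ∩ E) ≥ θ μ(E) > 0`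
and `‖u − u_A‖_{L^q(A)} ≤ Q`, `‖u − u_E‖_{L^q(E)} ≤ Q`, then
`‖u − u_{A∪E}‖_{L^q(A∪E)} ≤ 4(1 + θ^{-1/q}) Q`. -/
theorem glueing_lemma_for_means
    {X : Type*} [MetricSpace X] [MeasurableSpace X] [BorelSpace X]
    (μ : Measure X) (q : ℝ) (hq1 : 1 ≤ q)
    (A E : Set X) (hA : MeasurableSet A) (hE : MeasurableSet E)
    (hA0 : 0 < μ A) (hAfin : μ A < ⊤) (hE0 : 0 < μ E) (hEfin : μ E < ⊤)
    (θ : ℝ) (hθ : 0 < θ)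
    (hover : ENNReal.ofReal θ * μ E ≤ μ (A ∩ E))
    (u : X → ℝ) (hu : MemLp u (ENNReal.ofReal q) (μ.restrict (A ∪ E)))
    (Q : ℝ) (hQ : 0 ≤ Q)
    (hQA : (∫⁻ x in A, ENNReal.ofReal |u x - ⨍ z in A, u z ∂μ| ^ q ∂μ) ^ (1/q)
      ≤ ENNReal.ofReal Q)
    (hQE : (∫⁻ x in E, ENNReal.ofReal |u x - ⨍ z in E, u z ∂μ| ^ q ∂μ) ^ (1/q)
      ≤ ENNReal.ofReal Q) :
    (∫⁻ x in A ∪ E, ENNReal.ofReal |u x - ⨍ z in A ∪ E, u z ∂μ| ^ q ∂μ) ^ (1/q)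
      ≤ ENNReal.ofReal (4 * (1 + θ ^ (-1/q)) * Q) :=
  glueing_lemma_for_means_general μ q hq1 A E hAfin hEfin θ hθ hover u hu Q hQA hQE
end

section
/- Assume that μ is doubling within the ball B0 with doubling constant C_μ, and that the p-Poincaré inequality holds for the ball B0 itself: there are C > 0 and λ ≥ 1 such that ⨍_{B0} |u − u_{B0}| dμ ≤ C r_{B0} (⨍_{λB0} g^p dμ)^{1/p} for all functions u integrable on λB0 and all upper gradients g of u. Let B be a ball with B ⊆ 2B ⊆ B0 and r_B < (2/3) diam B0. Then μ((1/2)B) ≤ θ μ(B), where θ < 1 is a constant depending only on C_μ. -/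
open MeasureTheory Metric Set ENNReal NNReal Filter

/-! If the sphere `S(x, 5r/8)` were empty, the ball `B(x, 5r/8)` would be clopen, so its indicator
function would have the upper gradient `0`; the Poincaré inequality on `B0` then forces it to be
a.e. constant on `B0`, which is impossible since `B0` meets both the ball and its complement
(the latter because `diam B0 > 3r/2`). A point `z` on that sphere carries a ball `B(z, r/8)` inside
`B(x, r) \ B(x, r/2)`, and four doublings from `B(z, r/8)` cover `B(x, r)`, so
`μ(B(x, r/2)) ≤ μ(B(x, r)) - μ(B(z, r/8)) ≤ (1 - D^{-4}) μ(B(x, r))` with `D = max Cμ 1`. -/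

theorem ENNReal.le_one_sub_inv_mul_of_add_le {a b e K : ℝ≥0∞} (habe : a + b ≤ e)
    (he : e ≤ K * b) (he_top : e ≠ ⊤) : a ≤ (1 - K⁻¹) * e := by
  have hb : b ≠ ⊤ := ne_top_of_le_ne_top he_top (le_add_self.trans habe)
  have hKe : K⁻¹ * e ≤ b :=
    calc K⁻¹ * e ≤ K⁻¹ * (K * b) := by gcongr
      _ = (K⁻¹ * K) * b := (mul_assoc _ _ _).symm
      _ ≤ 1 * b := by gcongr; exact ENNReal.inv_mul_le_one K
      _ = b := one_mul b
  rw [ENNReal.sub_mul (fun _ _ => he_top), one_mul]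
  exact (ENNReal.le_sub_of_add_le_right hb habe).trans (tsub_le_tsub_left hKe e)

theorem isUpperGradient_zero_indicator_of_isClopen {Y : Type*} [PseudoMetricSpace Y]
    [MeasurableSpace Y] {U : Set Y} (hU : IsClopen U) :
    IsUpperGradient 0 (fun y => ((U.indicator 1 y : ℝ) : EReal)) := by
  refine ⟨measurable_const, fun γ l ⟨hl, hγ, _⟩ => ?_⟩
  have himage : IsPreconnected (γ '' Icc 0 l) := isPreconnected_Icc.image γ hγ
  have h0 : γ 0 ∈ γ '' Icc 0 l := mem_image_of_mem γ ⟨le_rfl, hl.le⟩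
  have hl' : γ l ∈ γ '' Icc 0 l := mem_image_of_mem γ ⟨hl.le, le_rfl⟩
  have hends : γ 0 ∈ U ↔ γ l ∈ U :=
    ⟨fun h => himage.subset_isClopen hU ⟨_, h0, h⟩ hl',
      fun h => himage.subset_isClopen hU ⟨_, hl', h⟩ h0⟩
  have hval : U.indicator (1 : Y → ℝ) (γ 0) = U.indicator 1 (γ l) := by
    by_cases h : γ 0 ∈ U
    · simp [indicator_of_mem h, indicator_of_mem (hends.mp h)]
    · simp [indicator_of_notMem h, indicator_of_notMem (hends.not.mp h)]
  beta_reduce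
  rw [hval, ← EReal.coe_sub, sub_self]
  simp [erealAbsE]

theorem eq_of_ae_restrict_eq_of_eqOn {X : Type*} [MeasurableSpace X] {μ : Measure X}
    {V W : Set X} {u : X → ℝ} {a c : ℝ} (hu : ∀ᵐ y ∂μ.restrict V, u y = a) (hWV : W ⊆ V)
    (hW : MeasurableSet W) (hμW : μ W ≠ 0) (huW : EqOn u (fun _ => c) W) : a = c := by
  have := ae_restrict_neBot.mpr hμW
  obtain ⟨y, hya, hyW⟩ := ((ae_restrict_of_ae_restrict_of_subset hWV hu).and
    (ae_restrict_mem hW)).exists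
  rw [← hya, huW hyW]

section MetricMeasure

variable {X : Type*} [MetricSpace X] [MeasurableSpace X] {μ : Measure X}

theorem BallsPosFinite.measure_ball_lt_top (hμ : BallsPosFinite μ) (x : X) (r : ℝ) :
    μ (ball x r) < ⊤ := by
  rcases le_or_gt r 0 with hr | hr
  · simp [ball_eq_empty.mpr hr]
  · exact (hμ x r hr).2

theorem BallsPosFinite.measure_pos_of_isOpen (hμ : BallsPosFinite μ) {U : Set X}
    (hU : IsOpen U) (hne : U.Nonempty) : 0 < μ U := by
  obtain ⟨y, hy⟩ := hne
  obtain ⟨ε, hε, hεU⟩ := Metric.isOpen_iff.mp hU y hy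
  exact (hμ y ε hε).1.trans_le (measure_mono hεU)

theorem DoublingWithin.mono {x0 : X} {r0 : ℝ} {C C' : ℝ≥0} (h : DoublingWithin μ x0 r0 C)
    (hC : C ≤ C') : DoublingWithin μ x0 r0 C' :=
  fun x r hr hsub => (h x r hr hsub).trans (by gcongr)

theorem DoublingWithin.measure_ball_two_pow_succ_mul_le {x0 : X} {r0 : ℝ} {C : ℝ≥0}
    (h : DoublingWithin μ x0 r0 C) {z : X} {t : ℝ} (ht : 0 < t) (n : ℕ)
    (hsub : ball z (2 ^ n * t) ⊆ ball x0 r0) :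
    μ (ball z (2 ^ (n + 1) * t)) ≤ (C : ℝ≥0∞) ^ (n + 1) * μ (ball z t) := by
  induction n with
  | zero => simpa using h z t ht (by simpa using hsub)
  | succ n ih =>
    have hsub' : ball z (2 ^ n * t) ⊆ ball x0 r0 :=
      (ball_subset_ball (by gcongr <;> norm_num)).trans hsub
    calc μ (ball z (2 ^ (n + 1 + 1) * t)) = μ (ball z (2 * (2 ^ (n + 1) * t))) := by ring_nf
      _ ≤ C * μ (ball z (2 ^ (n + 1) * t)) := h z _ (by positivity) hsub
      _ ≤ C * ((C : ℝ≥0∞) ^ (n + 1) * μ (ball z t)) := by gcongr; exact ih hsub'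
      _ = (C : ℝ≥0∞) ^ (n + 1 + 1) * μ (ball z t) := by ring

theorem PoincareBall.ae_eq_average_of_isUpperGradient_zero {p C lam r : ℝ} {x : X}
    (hP : PoincareBall μ 1 p x r C lam) (hfin : μ (ball x r) ≠ ⊤) (hp : 0 < p) {u : X → ℝ}
    (hu : Measurable u) (hu_int : IntegrableOn u (ball x (lam * r)) μ)
    (hg : IsUpperGradient 0 (fun y => (u y : EReal))) :
    ∀ᵐ y ∂μ.restrict (ball x r), u y = ⨍ z in ball x r, u z ∂μ := by
  have h := hP u 0 hu_int hg
  simp only [Pi.zero_apply, ENNReal.zero_rpow_of_pos hp, lintegral_zero, ENNReal.zero_div,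
    ENNReal.zero_rpow_of_pos (one_div_pos.mpr hp), mul_zero, nonpos_iff_eq_zero,
    one_div_one, ENNReal.rpow_one, ENNReal.div_eq_zero_iff, hfin, or_false] at h
  filter_upwards [(lintegral_eq_zero_iff (by fun_prop)).mp h] with y hy
  simpa [sub_eq_zero] using hy

theorem PoincareBall.subset_or_disjoint_of_isClopen [OpensMeasurableSpace X] {p C lam r0 : ℝ}
    {x0 : X} (hP : PoincareBall μ 1 p x0 r0 C lam) (hμ : BallsPosFinite μ) (hp : 0 < p)
    {U : Set X} (hU : IsClopen U) : ball x0 r0 ⊆ U ∨ Disjoint (ball x0 r0) U := by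
  have hUm : MeasurableSet U := hU.isOpen.measurableSet
  have hae := hP.ae_eq_average_of_isUpperGradient_zero (u := U.indicator 1)
    (hμ.measure_ball_lt_top x0 r0).ne hp (measurable_one.indicator hUm)
    ((integrableOn_const (hμ.measure_ball_lt_top _ _).ne).indicator hUm)
    (isUpperGradient_zero_indicator_of_isClopen hU)
  by_contra! h
  obtain ⟨hsub, hmeet⟩ := h
  have h1 := eq_of_ae_restrict_eq_of_eqOn (c := 1) hae inter_subset_left
    (measurableSet_ball.inter hUm)
    (hμ.measure_pos_of_isOpen (isOpen_ball.inter hU.isOpen)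
      (not_disjoint_iff_nonempty_inter.mp hmeet)).ne'
    (fun y hy => by simp [indicator_of_mem hy.2])
  have h0 := eq_of_ae_restrict_eq_of_eqOn (c := 0) hae sdiff_subset
    (measurableSet_ball.diff hUm)
    (hμ.measure_pos_of_isOpen (isOpen_ball.sdiff hU.isClosed) (sdiff_nonempty.mpr hsub)).ne'
    (fun y hy => by simp [indicator_of_notMem hy.2])
  exact one_ne_zero (h1.symm.trans h0)

theorem PoincareBall.sphere_nonempty [OpensMeasurableSpace X] {p C lam r0 : ℝ} {x0 : X}
    (hP : PoincareBall μ 1 p x0 r0 C lam) (hμ : BallsPosFinite μ) (hp : 0 < p) {x : X} {s : ℝ}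
    (hx : x ∈ ball x0 r0) (hs : 0 < s) (hfar : ¬ ball x0 r0 ⊆ ball x s) :
    (sphere x s).Nonempty := by
  by_contra! hempty
  have hclosed : IsClosed (ball x s) := by
    rw [← union_empty (ball x s), ← hempty, ball_union_sphere]
    exact isClosed_closedBall
  rcases hP.subset_or_disjoint_of_isClopen hμ hp ⟨hclosed, isOpen_ball⟩ with h | h
  · exact hfar h
  · exact h.ne_of_mem hx (mem_ball_self hs) rfl

end MetricMeasure

/-- reverse doubling. If `μ` is doubling within `B0` with constant `Cμ` and
the `p`-Poincaré inequality holds for the ball `B0` itself, then for every ball `B` with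
`B ⊆ 2B ⊆ B0` and `r_B < (2/3) diam B0` one has `μ((1/2)B) ≤ θ μ(B)` with `θ < 1`
depending only on `Cμ`. -/
theorem reverse_doubling (Cμ : ℝ≥0) :
    ∃ θ : ℝ≥0, θ < 1 ∧
      ∀ (X : Type) [MetricSpace X] [MeasurableSpace X] [BorelSpace X]
        (μ : Measure X), BallsPosFinite μ →
        ∀ (p : ℝ), 1 ≤ p →
        ∀ (x0 : X) (r0 : ℝ), 0 < r0 → DoublingWithin μ x0 r0 Cμ →
        ∀ (C lam : ℝ), 0 < C → 1 ≤ lam → PoincareBall μ 1 p x0 r0 C lam →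
        ∀ (x : X) (r : ℝ), 0 < r → ball x (2 * r) ⊆ ball x0 r0 →
          r < (2/3) * Metric.diam (ball x0 r0) →
          μ (ball x (r/2)) ≤ (θ : ℝ≥0∞) * μ (ball x r) := by
  set D : ℝ≥0 := Cμ ⊔ 1
  have hD : D ≠ 0 := (one_pos.trans_le le_sup_right).ne'
  refine ⟨1 - (D ^ 4)⁻¹, tsub_lt_self one_pos (by positivity), ?_⟩
  intro X _ _ _ μ hμ p hp x0 r0 _ hdbl C lam _ _ hP x r hr h2B hdiam
  have hx : x ∈ ball x0 r0 := h2B (mem_ball_self (by positivity))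
  have hfar : ¬ ball x0 r0 ⊆ ball x (5 * r / 8) := fun h => by
    linarith [(diam_mono h isBounded_ball).trans (diam_ball (x := x) (by positivity))]
  obtain ⟨z, hz⟩ := hP.sphere_nonempty hμ (by linarith) hx (by positivity) hfar
  rw [mem_sphere] at hz
  have hzx : dist x z = 5 * r / 8 := by rw [dist_comm, hz]
  have hsum : μ (ball x (r / 2)) + μ (ball z (r / 8)) ≤ μ (ball x r) := by
    rw [← measure_union (ball_disjoint_ball (by linarith)) measurableSet_ball]
    exact measure_mono (union_subset (ball_subset_ball (by linarith))
      (ball_subset_ball' (by linarith)))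
  have hcover : μ (ball x r) ≤ (D : ℝ≥0∞) ^ 4 * μ (ball z (r / 8)) :=
    calc μ (ball x r) ≤ μ (ball z (2 ^ (3 + 1) * (r / 8))) :=
          measure_mono (ball_subset_ball' (by linarith))
      _ ≤ (D : ℝ≥0∞) ^ 4 * μ (ball z (r / 8)) :=
          (hdbl.mono le_sup_left).measure_ball_two_pow_succ_mul_le (by positivity) 3
            ((ball_subset_ball' (by linarith)).trans h2B)
  rw [ENNReal.coe_sub, ENNReal.coe_one, ENNReal.coe_inv (pow_ne_zero 4 hD), ENNReal.coe_pow]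
  exact ENNReal.le_one_sub_inv_mul_of_add_le hsum hcover (hμ.measure_ball_lt_top x r).ne
end
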